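/- arXiv:math/0609685 — 8 statements merged into one kernel-verified Lean document; each statement's English description precedes it below -/
import Mathlib

section
/- Let B ⊆ X be a box of length l = l_B. Then for each x ∈ B the numbers a_−(x) and a_+(x) occurring in the definition of a box are uniquely determined, and the resulting functions a_± : B → ℝ, x ↦ a_±(x), are continuous. -/
open Pointwise

def IsProperAction (G X : Type*) [Group G] [MulAction G X] [TopologicalSpace X] : Prop :=
  ∀ x : X, ∃ U : Set X, IsOpen U ∧ x ∈ U ∧ {g : G | ((g • U) ∩ U).Nonempty}.Finite

def IsCocompactAction (G X : Type*) [Group G] [MulAction G X] [TopologicalSpace X] : Prop :=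
  CompactSpace (Quotient (MulAction.orbitRel G X))

def IsEquivariantFlow (G : Type*) {X : Type*} [Group G] [MulAction G X] [TopologicalSpace X]
    (Φ : ℝ → X → X) : Prop :=
  Continuous (fun p : ℝ × X => Φ p.1 p.2) ∧
  (∀ x : X, Φ 0 x = x) ∧
  (∀ s t : ℝ, ∀ x : X, Φ (s + t) x = Φ s (Φ t x)) ∧
  (∀ (g : G) (τ : ℝ) (x : X), Φ τ (g • x) = g • Φ τ x)

def IsFinSubset (G : Type*) {X : Type*} [Group G] [MulAction G X] (B : Set X) : Prop :=
  {g : G | g • B = B}.Finite ∧ ∀ g : G, ((g • B) ∩ B).Nonempty → g • B = B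

/-- The data `a₋(x) ≤ 0 ≤ a₊(x)` (together with some `ε(x) > 0`) required at a point `x`
of a box `B` of length `l` in Definition 2.3. -/
def IsBoxData {X : Type*} (Φ : ℝ → X → X) (B : Set X) (l : ℝ) (x : X) (am ap : ℝ) : Prop :=
  am ≤ 0 ∧ 0 ≤ ap ∧ l = ap - am ∧
  (∀ τ ∈ Set.Icc am ap, Φ τ x ∈ B) ∧
  ∃ ε : ℝ, 0 < ε ∧ ∀ τ ∈ Set.Ioo (am - ε) am ∪ Set.Ioo ap (ap + ε), Φ τ x ∉ B

/-- A box of length `l`: a compact `Fin`-subset such that every point carries box data. -/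
def IsBox (G : Type*) {X : Type*} [Group G] [MulAction G X] [TopologicalSpace X]
    (Φ : ℝ → X → X) (B : Set X) (l : ℝ) : Prop :=
  IsCompact B ∧ IsFinSubset G B ∧ 0 < l ∧ ∀ x ∈ B, ∃ am ap : ℝ, IsBoxData Φ B l x am ap

/-- If two box data at the same point existed with `am < am'`, then a time slightly after
`ap` would be both in and out of `B`. -/
lemma IsBoxData.not_lt_aux {X : Type*} {Φ : ℝ → X → X} {B : Set X} {l : ℝ} {x : X}
    {am ap am' ap' : ℝ} (h : IsBoxData Φ B l x am ap) (h' : IsBoxData Φ B l x am' ap') :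
    ¬ am < am' := by
  intro hlt
  obtain ⟨ham, hap, hl, hmem, ε, hε, hout⟩ := h
  obtain ⟨ham', hap', hl', hmem', -⟩ := h'
  have hapap' : ap < ap' := by linarith
  set τ := min (ap + ε / 2) ((ap + ap') / 2) with hτ
  have h1 : ap < τ := lt_min (by linarith) (by linarith)
  have h2 : τ < ap + ε := lt_of_le_of_lt (min_le_left _ _) (by linarith)
  have h3 : τ ≤ ap' := le_trans (min_le_right _ _) (by linarith)
  have h4 : am' ≤ τ := by linarith
  exact hout τ (Or.inr ⟨h1, h2⟩) (hmem' τ ⟨h4, h3⟩)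

/-- Lemma 2.6(2): the numbers `a₋(x)`, `a₊(x)` in the definition of a box are uniquely
determined and depend continuously on `x ∈ B`. -/
theorem box_a_pm_unique_and_continuous
    (G X : Type*) [Group G] [TopologicalSpace X] [TopologicalSpace.MetrizableSpace X]
    [MulAction G X] [ContinuousConstSMul G X]
    (hproper : IsProperAction G X) (hcocompact : IsCocompactAction G X)
    (Φ : ℝ → X → X) (hflow : IsEquivariantFlow G Φ)
    (B : Set X) (l : ℝ) (hB : IsBox G Φ B l) :
    (∀ x ∈ B, ∀ am ap am' ap' : ℝ,
        IsBoxData Φ B l x am ap → IsBoxData Φ B l x am' ap' → am = am' ∧ ap = ap') ∧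
    (∀ aminus aplus : X → ℝ,
        (∀ x ∈ B, IsBoxData Φ B l x (aminus x) (aplus x)) →
        ContinuousOn aminus B ∧ ContinuousOn aplus B) := by
  letI := TopologicalSpace.metrizableSpaceMetric X
  obtain ⟨hcont, h0, hadd, hequiv⟩ := hflow
  have hBclosed : IsClosed B := hB.1.isClosed
  constructor
  · intro x hx am ap am' ap' h h'
    have hm : am = am' :=
      le_antisymm (not_lt.mp (h'.not_lt_aux h)) (not_lt.mp (h.not_lt_aux h'))
    refine ⟨hm, ?_⟩
    have := h.2.2.1
    have := h'.2.2.1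
    linarith
  · intro aminus aplus hdata
    have haplus : ∀ x ∈ B, aplus x = aminus x + l := by
      intro x hx
      have := (hdata x hx).2.2.1
      linarith
    have hcτ : ∀ τ : ℝ, Continuous fun x : X => Φ τ x := by
      intro τ
      exact hcont.comp (continuous_const.prodMk continuous_id)
    have hm : ContinuousOn aminus B := by
      intro x₀ hx₀
      obtain ⟨ham, hap, hl, hmem, ε, hε, hout⟩ := hdata x₀ hx₀
      rw [ContinuousWithinAt, Metric.tendsto_nhds]
      intro δ hδ
      set η := min (δ / 2) (ε / 2) with hη
      have hη0 : 0 < η := lt_min (by linarith) (by linarith)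
      have hηε : η < ε := lt_of_le_of_lt (min_le_right _ _) (by linarith)
      have hηδ : η < δ := lt_of_le_of_lt (min_le_left _ _) (by linarith)
      set τ₁ := aminus x₀ - η with hτ₁
      set τ₂ := aplus x₀ + η with hτ₂
      have hx₀1 : Φ τ₁ x₀ ∉ B := hout τ₁ (Or.inl ⟨by linarith, by linarith⟩)
      have hx₀2 : Φ τ₂ x₀ ∉ B := hout τ₂ (Or.inr ⟨by linarith, by linarith⟩)
      have hU1 : IsOpen ((fun x : X => Φ τ₁ x) ⁻¹' Bᶜ) :=
        hBclosed.isOpen_compl.preimage (hcτ τ₁)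
      have hU2 : IsOpen ((fun x : X => Φ τ₂ x) ⁻¹' Bᶜ) :=
        hBclosed.isOpen_compl.preimage (hcτ τ₂)
      filter_upwards [self_mem_nhdsWithin,
        mem_nhdsWithin_of_mem_nhds (hU1.mem_nhds hx₀1),
        mem_nhdsWithin_of_mem_nhds (hU2.mem_nhds hx₀2)] with x hxB hx1 hx2
      obtain ⟨ham', hap', hl', hmem', -⟩ := hdata x hxB
      have hlow : τ₁ < aminus x := by
        by_contra hcon
        push_neg at hcon
        exact hx1 (hmem' τ₁ ⟨hcon, by linarith⟩)
      have hhigh : aplus x < τ₂ := by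
        by_contra hcon
        push_neg at hcon
        exact hx2 (hmem' τ₂ ⟨by linarith, hcon⟩)
      rw [Real.dist_eq, abs_sub_lt_iff]
      constructor <;> linarith
    refine ⟨hm, ?_⟩
    exact ((hm.add continuousOn_const).congr haplus)
end

section
/- Let B ⊆ X be a box of length l = l_B with central slice S_B := {x ∈ B : a_−(x) + a_+(x) = 0}. Then the map μ : S_B × [−l/2, l/2] → B, (x, τ) ↦ Φ_τ(x), is a homeomorphism with inverse x ↦ (Φ_{(a_−(x)+a_+(x))/2}(x), l/2 − a_+(x)); μ is G_B-equivariant, where G_B = G_{S_B} acts on S_B × [−l/2, l/2] by g·(s,t) = (gs, t). Moreover B° = μ((S_B ∩ B°) × (−l/2, l/2)) and ∂_±B := {x ∈ B : a_±(x) = 0} = μ(S_B × {±l/2}), where B° is the interior and ∂B the boundary of B in X. -/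
open Pointwise

/-- Lemma 2.6(3): the map `μ : S_B × [-l/2, l/2] → B, (x,τ) ↦ Φ_τ(x)` is a
`G_B`-equivariant homeomorphism with the stated inverse, `G_B = G_{S_B}`, and the
interior and top/bottom of `B` are described in terms of the central slice. -/
theorem box_central_slice_homeo
    (G X : Type*) [Group G] [TopologicalSpace X] [TopologicalSpace.MetrizableSpace X]
    [MulAction G X] [ContinuousConstSMul G X]
    (hproper : IsProperAction G X) (hcocompact : IsCocompactAction G X)
    (Φ : ℝ → X → X) (hflow : IsEquivariantFlow G Φ)
    (B : Set X) (l : ℝ) (hB : IsBox G Φ B l)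
    (am ap : X → ℝ) (hdata : ∀ x ∈ B, IsBoxData Φ B l x (am x) (ap x)) :
    ∃ e : ↥({x ∈ B | am x + ap x = 0}) × ↥(Set.Icc (-(l/2)) (l/2)) ≃ₜ ↥B,
      (∀ p : ↥({x ∈ B | am x + ap x = 0}) × ↥(Set.Icc (-(l/2)) (l/2)),
          (e p : X) = Φ (p.2 : ℝ) (p.1 : X)) ∧
      (∀ y : ↥B, ((e.symm y).1 : X) = Φ ((am (y : X) + ap (y : X)) / 2) (y : X) ∧
          ((e.symm y).2 : ℝ) = l/2 - ap (y : X)) ∧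
      (∀ g : G, g • B = B ↔ g • {x ∈ B | am x + ap x = 0} = {x ∈ B | am x + ap x = 0}) ∧
      (∀ (g : G), g • B = B → ∀ x ∈ {x ∈ B | am x + ap x = 0},
          ∀ τ ∈ Set.Icc (-(l/2)) (l/2), Φ τ (g • x) = g • Φ τ x) ∧
      (interior B = {y | ∃ x ∈ {x ∈ B | am x + ap x = 0} ∩ interior B,
          ∃ τ ∈ Set.Ioo (-(l/2)) (l/2), y = Φ τ x}) ∧
      ({x ∈ B | am x = 0} = (fun x => Φ (-(l/2)) x) '' {x ∈ B | am x + ap x = 0}) ∧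
      ({x ∈ B | ap x = 0} = (fun x => Φ (l/2) x) '' {x ∈ B | am x + ap x = 0}) := by
  classical
  obtain ⟨hcont, hΦ0, hΦadd, hΦg⟩ := hflow
  obtain ⟨hBcpt, hBfin, hl, -⟩ := hB
  have hBclosed : IsClosed B := hBcpt.isClosed
  -- continuity of the flow in each variable
  have hcτ : ∀ τ : ℝ, Continuous (Φ τ) := fun τ =>
    hcont.comp (continuous_const.prodMk continuous_id)
  have hct : ∀ x : X, Continuous fun s : ℝ => Φ s x := fun x =>
    hcont.comp (continuous_id.prodMk continuous_const)
  have hopen : ∀ τ : ℝ, IsOpenMap (Φ τ) := by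
    intro τ
    exact (Homeomorph.mk ⟨Φ τ, Φ (-τ),
      fun x => by rw [← hΦadd]; simp [hΦ0],
      fun x => by rw [← hΦadd]; simp [hΦ0]⟩ (hcτ τ) (hcτ (-τ))).isOpenMap
  have hbounds : ∀ x ∈ B, am x ≤ 0 ∧ 0 ≤ ap x ∧ l = ap x - am x :=
    fun x hx => ⟨(hdata x hx).1, (hdata x hx).2.1, (hdata x hx).2.2.1⟩
  -- uniqueness of box data
  have huniq : ∀ x ∈ B, ∀ a b : ℝ, IsBoxData Φ B l x a b → a = am x ∧ b = ap x := by
    intro x hx a b hab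
    obtain ⟨ha0, hb0, hlab, hmem, ε, hε, hout⟩ := hab
    obtain ⟨ha0', hb0', hlab', hmem', ε', hε', hout'⟩ := hdata x hx
    have key : a = am x := by
      rcases lt_trichotomy a (am x) with h | h | h
      · exfalso
        have h1 : max a (am x - ε'/2) < am x := max_lt h (by linarith)
        have h2 : am x - ε' < max a (am x - ε'/2) :=
          lt_of_lt_of_le (by linarith) (le_max_right _ _)
        have h4 : max a (am x - ε'/2) ≤ b :=
          le_trans (le_of_lt (lt_of_lt_of_le h1 ha0')) hb0
        exact hout' _ (Or.inl ⟨h2, h1⟩) (hmem _ ⟨le_max_left _ _, h4⟩)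
      · exact h
      · exfalso
        have h1 : max (am x) (a - ε/2) < a := max_lt h (by linarith)
        have h2 : a - ε < max (am x) (a - ε/2) :=
          lt_of_lt_of_le (by linarith) (le_max_right _ _)
        have h4 : max (am x) (a - ε/2) ≤ ap x :=
          le_trans (le_of_lt (lt_of_lt_of_le h1 ha0)) hb0'
        exact hout _ (Or.inl ⟨h2, h1⟩) (hmem' _ ⟨le_max_left _ _, h4⟩)
    exact ⟨key, by linarith⟩
  -- translation of box data along the flow
  have htrans : ∀ x ∈ B, ∀ τ : ℝ, am x ≤ τ → τ ≤ ap x →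
      Φ τ x ∈ B ∧ am (Φ τ x) = am x - τ ∧ ap (Φ τ x) = ap x - τ := by
    intro x hx τ h1 h2
    obtain ⟨ha0, hb0, hlab, hmem, ε, hε, hout⟩ := hdata x hx
    have hyB : Φ τ x ∈ B := hmem τ ⟨h1, h2⟩
    have hdata' : IsBoxData Φ B l (Φ τ x) (am x - τ) (ap x - τ) := by
      refine ⟨by linarith, by linarith, by linarith, ?_, ε, hε, ?_⟩
      · intro s hs
        rw [← hΦadd]
        exact hmem (s + τ) ⟨by linarith [hs.1], by linarith [hs.2]⟩
      · intro s hs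
        rw [← hΦadd]
        rcases hs with ⟨hs1, hs2⟩ | ⟨hs1, hs2⟩
        · exact hout (s + τ) (Or.inl ⟨by linarith, by linarith⟩)
        · exact hout (s + τ) (Or.inr ⟨by linarith, by linarith⟩)
    obtain ⟨e1, e2⟩ := huniq _ hyB _ _ hdata'
    exact ⟨hyB, e1.symm, e2.symm⟩
  -- exit estimates
  have hexit : ∀ x ∈ B, ∀ t : ℝ, 0 ≤ t → (∀ s, 0 ≤ s → s ≤ t → Φ s x ∈ B) → t ≤ ap x := by
    intro x hx t ht hmem
    by_contra h
    push_neg at h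
    obtain ⟨ha0, hb0, hlab, -, ε, hε, hout⟩ := hdata x hx
    have h1 : ap x < min t (ap x + ε/2) := lt_min h (by linarith)
    have h2 : min t (ap x + ε/2) < ap x + ε :=
      lt_of_le_of_lt (min_le_right _ _) (by linarith)
    exact hout _ (Or.inr ⟨h1, h2⟩) (hmem _ (le_trans hb0 h1.le) (min_le_left _ _))
  have hent : ∀ x ∈ B, ∀ t : ℝ, t ≤ 0 → (∀ s, t ≤ s → s ≤ 0 → Φ s x ∈ B) → am x ≤ t := by
    intro x hx t ht hmem
    by_contra h
    push_neg at h
    obtain ⟨ha0, hb0, hlab, -, ε, hε, hout⟩ := hdata x hx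
    have h1 : max t (am x - ε/2) < am x := max_lt h (by linarith)
    have h2 : am x - ε < max t (am x - ε/2) :=
      lt_of_lt_of_le (by linarith) (le_max_right _ _)
    exact hout _ (Or.inl ⟨h2, h1⟩)
      (hmem _ (le_max_left _ _) (le_trans h1.le ha0))
  set S := {x ∈ B | am x + ap x = 0} with hSdef
  have hSmem_iff : ∀ x : X, x ∈ S ↔ x ∈ B ∧ am x + ap x = 0 := fun x => Iff.rfl
  have hSval : ∀ x ∈ S, x ∈ B ∧ am x = -(l/2) ∧ ap x = l/2 := by
    intro x hx
    obtain ⟨hxB, hsum⟩ := (hSmem_iff x).mp hx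
    obtain ⟨h1, h2, h3⟩ := hbounds x hxB
    exact ⟨hxB, by linarith, by linarith⟩
  -- the central slice is closed, hence compact
  have hSeq : S = B ∩ ⋂ τ ∈ Set.Icc (-(l/2)) (l/2), Φ τ ⁻¹' B := by
    ext x
    simp only [Set.mem_inter_iff, Set.mem_iInter, Set.mem_preimage, Set.mem_Icc]
    constructor
    · intro hx
      obtain ⟨hxB, ha, hp⟩ := hSval x hx
      exact ⟨hxB, fun τ hτ =>
        (htrans x hxB τ (by rw [ha]; exact hτ.1) (by rw [hp]; exact hτ.2)).1⟩
    · rintro ⟨hxB, hall⟩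
      have h1 : l/2 ≤ ap x :=
        hexit x hxB (l/2) (by linarith) (fun s hs1 hs2 => hall s ⟨by linarith, hs2⟩)
      have h2 : am x ≤ -(l/2) :=
        hent x hxB (-(l/2)) (by linarith) (fun s hs1 hs2 => hall s ⟨hs1, by linarith⟩)
      have h3 := (hbounds x hxB).2.2
      exact (hSmem_iff x).mpr ⟨hxB, by linarith⟩
  have hSclosed : IsClosed S := by
    rw [hSeq]
    exact hBclosed.inter (isClosed_biInter fun τ _ => hBclosed.preimage (hcτ τ))
  have hScpt : IsCompact S :=
    hBcpt.of_isClosed_subset hSclosed (fun x hx => ((hSmem_iff x).mp hx).1)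
  haveI : CompactSpace ↥S := isCompact_iff_compactSpace.mp hScpt
  haveI : CompactSpace ↥(Set.Icc (-(l/2)) (l/2)) := isCompact_iff_compactSpace.mp isCompact_Icc
  -- the equivalence
  have hμmem : ∀ p : ↥S × ↥(Set.Icc (-(l/2)) (l/2)), Φ (p.2 : ℝ) (p.1 : X) ∈ B := by
    intro p
    obtain ⟨hxB, ha, hp⟩ := hSval p.1.1 p.1.2
    exact (htrans _ hxB _ (by rw [ha]; exact p.2.2.1) (by rw [hp]; exact p.2.2.2)).1
  have hνmem1 : ∀ y : ↥B, Φ ((am y.1 + ap y.1)/2) y.1 ∈ S := by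
    intro y
    obtain ⟨h1, h2, h3⟩ := hbounds y.1 y.2
    obtain ⟨hmB, e1, e2⟩ := htrans y.1 y.2 ((am y.1 + ap y.1)/2) (by linarith) (by linarith)
    exact (hSmem_iff _).mpr ⟨hmB, by rw [e1, e2]; ring⟩
  have hνmem2 : ∀ y : ↥B, l/2 - ap y.1 ∈ Set.Icc (-(l/2)) (l/2) := by
    intro y
    obtain ⟨h1, h2, h3⟩ := hbounds y.1 y.2
    exact Set.mem_Icc.mpr ⟨by linarith, by linarith⟩
  let eq0 : ↥S × ↥(Set.Icc (-(l/2)) (l/2)) ≃ ↥B :=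
    { toFun := fun p => ⟨Φ (p.2 : ℝ) (p.1 : X), hμmem p⟩
      invFun := fun y =>
        (⟨Φ ((am y.1 + ap y.1)/2) y.1, hνmem1 y⟩, ⟨l/2 - ap y.1, hνmem2 y⟩)
      left_inv := by
        rintro ⟨⟨x, hxS⟩, ⟨τ, hτ⟩⟩
        obtain ⟨hxB, ha, hp⟩ := hSval x hxS
        obtain ⟨hτ1, hτ2⟩ := hτ
        obtain ⟨hyB, e1, e2⟩ := htrans x hxB τ (by linarith) (by linarith)
        refine Prod.ext (Subtype.ext ?_) (Subtype.ext ?_)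
        · show Φ ((am (Φ τ x) + ap (Φ τ x))/2) (Φ τ x) = x
          have hc : (am (Φ τ x) + ap (Φ τ x))/2 = -τ := by rw [e1, e2]; linarith
          rw [hc, ← hΦadd]; simp [hΦ0]
        · show l/2 - ap (Φ τ x) = τ
          rw [e2]; linarith
      right_inv := by
        rintro ⟨y, hyB⟩
        apply Subtype.ext
        show Φ (l/2 - ap y) (Φ ((am y + ap y)/2) y) = y
        obtain ⟨h1, h2, h3⟩ := hbounds y hyB
        rw [← hΦadd]
        have hz : l/2 - ap y + (am y + ap y)/2 = 0 := by linarith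
        rw [hz, hΦ0] }
  have hμcont : Continuous (eq0 : ↥S × ↥(Set.Icc (-(l/2)) (l/2)) → ↥B) := by
    apply Continuous.subtype_mk
    exact hcont.comp ((continuous_subtype_val.comp continuous_snd).prodMk
      (continuous_subtype_val.comp continuous_fst))
  -- continuity of `ap` and `am` on `B`
  have hapcont : Continuous fun y : ↥B => ap y.1 := by
    have h1 : Continuous fun y : ↥B => ((eq0.symm y).2 : ℝ) :=
      continuous_subtype_val.comp (continuous_snd.comp
        (Continuous.homeoOfEquivCompactToT2 (f := eq0) hμcont).symm.continuous)
    have h2 : (fun y : ↥B => ((eq0.symm y).2 : ℝ)) = fun y : ↥B => l/2 - ap y.1 := rfl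
    rw [h2] at h1
    have h3 : (fun y : ↥B => ap y.1) = fun y : ↥B => l/2 - (l/2 - ap y.1) := by
      funext y; ring
    rw [h3]
    exact continuous_const.sub h1
  have hamcont : Continuous fun y : ↥B => am y.1 := by
    have h3 : (fun y : ↥B => am y.1) = fun y : ↥B => ap y.1 - l := by
      funext y
      have := (hbounds y.1 y.2).2.2
      linarith
    rw [h3]
    exact hapcont.sub continuous_const
  -- key interior lemma
  have hkey : ∀ (c : ℝ) (w : X), w ∈ interior B → am w < c → c < ap w →
      Φ c w ∈ interior B := by
    intro c w hw h1 h2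
    have hwB : w ∈ B := interior_subset hw
    have hA : IsOpen {z : ↥B | am z.1 < c ∧ c < ap z.1} :=
      (isOpen_lt hamcont continuous_const).inter (isOpen_lt continuous_const hapcont)
    obtain ⟨O, hO, hOeq⟩ := isOpen_induced_iff.mp hA
    have hwO : w ∈ O := by
      have h : (⟨w, hwB⟩ : ↥B) ∈ Subtype.val ⁻¹' O := by
        rw [hOeq]; exact ⟨h1, h2⟩
      exact h
    have hsub : Φ c '' (interior B ∩ O) ⊆ B := by
      rintro - ⟨z, ⟨hz1, hz2⟩, rfl⟩
      have hzB : z ∈ B := interior_subset hz1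
      have hz3 : (⟨z, hzB⟩ : ↥B) ∈ {z : ↥B | am z.1 < c ∧ c < ap z.1} := by
        rw [← hOeq]; exact hz2
      exact (htrans z hzB c hz3.1.le hz3.2.le).1
    exact interior_maximal hsub (hopen c _ (isOpen_interior.inter hO)) ⟨w, ⟨hw, hwO⟩, rfl⟩
  -- interior points have strictly negative/positive box data
  have h0 : ∀ y ∈ interior B, am y < 0 ∧ 0 < ap y := by
    intro y hy
    have hyB : y ∈ B := interior_subset hy
    obtain ⟨ha0, hb0, hlab, -, ε, hε, hout⟩ := hdata y hyB
    have hOt : IsOpen {s : ℝ | Φ s y ∈ interior B} := isOpen_interior.preimage (hct y)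
    have h0m : (0:ℝ) ∈ {s : ℝ | Φ s y ∈ interior B} := by
      show Φ 0 y ∈ interior B
      rw [hΦ0]; exact hy
    obtain ⟨δ, hδ, hball⟩ := Metric.isOpen_iff.mp hOt 0 h0m
    have hmin : 0 < min ε δ := lt_min hε hδ
    have hd1 : min ε δ ≤ ε := min_le_left _ _
    have hd2 : min ε δ ≤ δ := min_le_right _ _
    constructor
    · rcases lt_or_eq_of_le ha0 with h | h
      · exact h
      · exfalso
        have hsB : Φ (-(min ε δ / 2)) y ∈ B := by
          apply interior_subset
          apply hball
          rw [Metric.mem_ball, Real.dist_eq]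
          rw [show (-(min ε δ / 2) - 0) = -(min ε δ / 2) by ring, abs_neg,
            abs_of_nonneg (by linarith)]
          linarith
        exact hout _ (Or.inl ⟨by linarith, by linarith⟩) hsB
    · rcases lt_or_eq_of_le hb0 with h | h
      · exact h
      · exfalso
        have hsB : Φ (min ε δ / 2) y ∈ B := by
          apply interior_subset
          apply hball
          rw [Metric.mem_ball, Real.dist_eq]
          rw [show (min ε δ / 2 - 0) = min ε δ / 2 by ring,
            abs_of_nonneg (by linarith)]
          linarith
        exact hout _ (Or.inr ⟨by linarith, by linarith⟩) hsB
  -- equivariance of the box data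
  have hGE : ∀ g : G, g • B = B → ∀ x ∈ B,
      g • x ∈ B ∧ am (g • x) = am x ∧ ap (g • x) = ap x := by
    intro g hg x hx
    have hgx : g • x ∈ B := by rw [← hg]; exact Set.smul_mem_smul_set hx
    obtain ⟨h1, h2, h3, h4, ε, hε, h5⟩ := hdata x hx
    have hdata' : IsBoxData Φ B l (g • x) (am x) (ap x) := by
      refine ⟨h1, h2, h3, fun τ hτ => ?_, ε, hε, fun τ hτ hmem => ?_⟩
      · rw [hΦg, ← hg]
        exact Set.smul_mem_smul_set (h4 τ hτ)
      · rw [hΦg, ← hg] at hmem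
        exact h5 τ hτ (Set.smul_mem_smul_set_iff.mp hmem)
    obtain ⟨e1, e2⟩ := huniq _ hgx _ _ hdata'
    exact ⟨hgx, e1.symm, e2.symm⟩
  have hGS1 : ∀ g : G, g • B = B → g • S ⊆ S := by
    intro g hg y hy
    obtain ⟨x, hx, rfl⟩ := hy
    obtain ⟨hxB, hxs⟩ := (hSmem_iff x).mp hx
    obtain ⟨h1, h2, h3⟩ := hGE g hg x hxB
    exact (hSmem_iff _).mpr ⟨h1, by rw [h2, h3]; exact hxs⟩
  have hrepr : ∀ x ∈ B, ∃ x₀ ∈ S, ∃ τ ∈ Set.Icc (-(l/2)) (l/2), x = Φ τ x₀ := by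
    intro x hx
    obtain ⟨h1, h2, h3⟩ := hbounds x hx
    obtain ⟨hmB, e1, e2⟩ := htrans x hx ((am x + ap x)/2) (by linarith) (by linarith)
    refine ⟨Φ ((am x + ap x)/2) x, (hSmem_iff _).mpr ⟨hmB, by rw [e1, e2]; ring⟩,
      -((am x + ap x)/2), ⟨by simp only [Set.mem_Icc]; constructor <;> linarith, ?_⟩⟩
    rw [← hΦadd]; simp [hΦ0]
  have hGS2 : ∀ g : G, g • S = S → g • B ⊆ B := by
    intro g hg y hy
    obtain ⟨x, hx, rfl⟩ := hy
    obtain ⟨x₀, hx₀, τ, hτ, rfl⟩ := hrepr x hx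
    have hgx₀ : g • x₀ ∈ S := by rw [← hg]; exact Set.smul_mem_smul_set hx₀
    obtain ⟨hBm, ha, hp⟩ := hSval _ hgx₀
    show g • Φ τ x₀ ∈ B
    rw [← hΦg]
    exact (htrans _ hBm τ (by rw [ha]; exact hτ.1) (by rw [hp]; exact hτ.2)).1
  refine ⟨Continuous.homeoOfEquivCompactToT2 (f := eq0) hμcont,
    fun p => rfl, fun y => ⟨rfl, rfl⟩, ?_, fun g _ x _ τ _ => hΦg g τ x, ?_, ?_, ?_⟩
  · -- G_B = G_S
    intro g
    constructor
    · intro hg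
      refine subset_antisymm (hGS1 g hg) ?_
      have h' : g⁻¹ • B = B := by
        conv_lhs => rw [← hg]
        exact inv_smul_smul g B
      intro y hy
      have h2 : g • (g⁻¹ • y) ∈ g • S :=
        Set.smul_mem_smul_set (hGS1 g⁻¹ h' (Set.smul_mem_smul_set hy))
      rwa [smul_inv_smul] at h2
    · intro hg
      refine subset_antisymm (hGS2 g hg) ?_
      have h' : g⁻¹ • S = S := by
        conv_lhs => rw [← hg]
        exact inv_smul_smul g S
      intro y hy
      have h2 : g • (g⁻¹ • y) ∈ g • B :=
        Set.smul_mem_smul_set (hGS2 g⁻¹ h' (Set.smul_mem_smul_set hy))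
      rwa [smul_inv_smul] at h2
  · -- interior description
    ext y
    simp only [Set.mem_setOf_eq, Set.mem_inter_iff]
    constructor
    · intro hy
      have hyB : y ∈ B := interior_subset hy
      obtain ⟨hneg, hpos⟩ := h0 y hy
      obtain ⟨h1, h2, h3⟩ := hbounds y hyB
      obtain ⟨hmB, e1, e2⟩ := htrans y hyB ((am y + ap y)/2) (by linarith) (by linarith)
      refine ⟨Φ ((am y + ap y)/2) y,
        ⟨(hSmem_iff _).mpr ⟨hmB, by rw [e1, e2]; ring⟩,
          hkey _ y hy (by linarith) (by linarith)⟩,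
        -((am y + ap y)/2), ⟨by constructor <;> linarith, ?_⟩⟩
      rw [← hΦadd]; simp [hΦ0]
    · rintro ⟨x, ⟨hxS, hxint⟩, τ, hτ, rfl⟩
      obtain ⟨hxB, ha, hp⟩ := hSval x hxS
      exact hkey τ x hxint (by rw [ha]; exact hτ.1) (by rw [hp]; exact hτ.2)
  · -- bottom boundary
    ext x
    simp only [Set.mem_setOf_eq, Set.mem_image]
    constructor
    · rintro ⟨hxB, hma⟩
      obtain ⟨h1, h2, h3⟩ := hbounds x hxB
      obtain ⟨hmB, e1, e2⟩ := htrans x hxB (l/2) (by linarith) (by linarith)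
      refine ⟨Φ (l/2) x, (hSmem_iff _).mpr ⟨hmB, by rw [e1, e2]; linarith⟩, ?_⟩
      rw [← hΦadd]; simp [hΦ0]
    · rintro ⟨x₀, hx₀, rfl⟩
      obtain ⟨hxB, ha, hp⟩ := hSval x₀ hx₀
      obtain ⟨hmB, e1, e2⟩ := htrans x₀ hxB (-(l/2)) (le_of_eq ha)
        (by rw [hp]; linarith)
      exact ⟨hmB, by rw [e1, ha]; ring⟩
  · -- top boundary
    ext x
    simp only [Set.mem_setOf_eq, Set.mem_image]
    constructor
    · rintro ⟨hxB, hpa⟩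
      obtain ⟨h1, h2, h3⟩ := hbounds x hxB
      obtain ⟨hmB, e1, e2⟩ := htrans x hxB (-(l/2)) (by linarith) (by linarith)
      refine ⟨Φ (-(l/2)) x, (hSmem_iff _).mpr ⟨hmB, by rw [e1, e2]; linarith⟩, ?_⟩
      rw [← hΦadd]; simp [hΦ0]
    · rintro ⟨x₀, hx₀, rfl⟩
      obtain ⟨hxB, ha, hp⟩ := hSval x₀ hx₀
      obtain ⟨hmB, e1, e2⟩ := htrans x₀ hxB (l/2) (by rw [ha]; linarith)
        (le_of_eq hp.symm)
      exact ⟨hmB, by rw [e2, hp]; ring⟩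
end

section
/- Let B ⊆ X be a box of length l_B. Then there exists ε_B > 0 depending only on B such that for every x ∈ B and every τ ∈ (a_−(x) − ε_B, a_−(x)) ∪ (a_+(x), a_+(x) + ε_B) one has Φ_τ(x) ∉ B; i.e. the numbers ε(x) in the definition of a box can be chosen with ε(x) ≥ ε_B for all x ∈ B. -/
open Pointwise

/-- Limit lemma: if `Φ σ (u n) ∈ B` for all `σ ∈ [aa n, bb n]` and everything converges,
the same holds in the limit (for `B` closed). -/
lemma box_limit_Icc {X : Type*} [TopologicalSpace X] {Φ : ℝ → X → X}
    (hcont : Continuous fun p : ℝ × X => Φ p.1 p.2) {B : Set X} (hBcl : IsClosed B)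
    {x : X} {a b : ℝ} {u : ℕ → X} {aa bb : ℕ → ℝ}
    (hu : Filter.Tendsto u Filter.atTop (nhds x))
    (ha : Filter.Tendsto aa Filter.atTop (nhds a))
    (hb : Filter.Tendsto bb Filter.atTop (nhds b))
    (hle : ∀ n, aa n ≤ bb n)
    (hmem : ∀ n, ∀ σ ∈ Set.Icc (aa n) (bb n), Φ σ (u n) ∈ B) :
    ∀ σ ∈ Set.Icc a b, Φ σ x ∈ B := by
  intro σ hσ
  set s : ℕ → ℝ := fun n => max (aa n) (min σ (bb n)) with hs
  have hsmem : ∀ n, s n ∈ Set.Icc (aa n) (bb n) :=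
    fun n => ⟨le_max_left _ _, max_le (hle n) (min_le_right _ _)⟩
  have hst : Filter.Tendsto s Filter.atTop (nhds σ) := by
    have : Filter.Tendsto s Filter.atTop (nhds (max a (min σ b))) :=
      ha.max ((tendsto_const_nhds).min hb)
    rwa [min_eq_left hσ.2, max_eq_right hσ.1] at this
  have htend : Filter.Tendsto (fun n => Φ (s n) (u n)) Filter.atTop (nhds (Φ σ x)) := by
    have : Filter.Tendsto (fun n => ((s n), u n)) Filter.atTop (nhds (σ, x)) :=
      hst.prodMk_nhds hu
    exact (hcont.tendsto (σ, x)).comp this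
  exact hBcl.mem_of_tendsto htend (Filter.Eventually.of_forall fun n => hmem n _ (hsmem n))

/-- Uniqueness lemma: the endpoints of the maximal interval around `0` on which the
flow stays in `B` are determined by the box data. -/
lemma box_data_unique {X : Type*} {Φ : ℝ → X → X} {B : Set X} {l : ℝ} {x : X}
    {A P a b : ℝ} (hd : IsBoxData Φ B l x A P) (hb : b ≤ 0) (ha : 0 ≤ a)
    (hlen : a - b = l) (hmem : ∀ σ ∈ Set.Icc b a, Φ σ x ∈ B) : a = P ∧ b = A := by
  obtain ⟨hA, hP, hl, _, ε, hε, hout⟩ := hd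
  have haP : a ≤ P := by
    by_contra h
    push_neg at h
    set σ := min ((P + a) / 2) (P + ε / 2) with hσ
    have h1 : P < σ := lt_min (by linarith) (by linarith)
    have h2 : σ < P + ε := lt_of_le_of_lt (min_le_right _ _) (by linarith)
    have h3 : σ ∈ Set.Icc b a :=
      ⟨by linarith, le_trans (min_le_left _ _) (by linarith)⟩
    exact hout σ (Or.inr ⟨h1, h2⟩) (hmem σ h3)
  have hbA : A ≤ b := by
    by_contra h
    push_neg at h
    set σ := max ((A + b) / 2) (A - ε / 2) with hσ
    have h1 : σ < A := max_lt (by linarith) (by linarith)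
    have h2 : A - ε < σ := lt_of_lt_of_le (by linarith) (le_max_right _ _)
    have h3 : σ ∈ Set.Icc b a :=
      ⟨le_trans (by linarith) (le_max_left _ _), by linarith⟩
    exact hout σ (Or.inl ⟨h2, h1⟩) (hmem σ h3)
  constructor <;> linarith

/-- Key one-sided uniform lemma (forward direction `a₊`). -/
lemma box_uniform_epsilon_plus {X : Type*} [TopologicalSpace X]
    [TopologicalSpace.MetrizableSpace X]
    (Φ : ℝ → X → X) (hcont : Continuous fun p : ℝ × X => Φ p.1 p.2)
    (hadd : ∀ s t : ℝ, ∀ x : X, Φ (s + t) x = Φ s (Φ t x))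
    (B : Set X) (hBc : IsCompact B) (l : ℝ) (hl : 0 < l)
    (am ap : X → ℝ) (hdata : ∀ x ∈ B, IsBoxData Φ B l x (am x) (ap x)) :
    ∃ ε : ℝ, 0 < ε ∧ ∀ x ∈ B, ∀ τ ∈ Set.Ioo (ap x) (ap x + ε), Φ τ x ∉ B := by
  letI : MetricSpace X := TopologicalSpace.metrizableSpaceMetric X
  have hBcl : IsClosed B := hBc.isClosed
  by_contra hcon
  push_neg at hcon
  have H : ∀ n : ℕ, ∃ x, x ∈ B ∧ ∃ τ ∈ Set.Ioo (ap x) (ap x + 1 / ((n : ℝ) + 1)),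
      Φ τ x ∈ B := by
    intro n
    obtain ⟨x, hx, τ, hτ, hτB⟩ := hcon (1 / ((n : ℝ) + 1)) (by positivity)
    exact ⟨x, hx, τ, hτ, hτB⟩
  choose u hu τ hτ hτB using H
  -- replace τ by the first return time, so that the flow stays in B on [t, t+l]
  have FR : ∀ n : ℕ, ∃ t, ap (u n) < t ∧ t < ap (u n) + 1 / ((n : ℝ) + 1) ∧
      ∀ σ ∈ Set.Icc t (t + l), Φ σ (u n) ∈ B := by
    intro n
    obtain ⟨hAn, hPn, hln, hIccn, εn, hεn, houtn⟩ := hdata (u n) (hu n)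
    set T : Set ℝ := {s | ap (u n) < s ∧ Φ s (u n) ∈ B} with hT
    have hτT : τ n ∈ T := ⟨(hτ n).1, hτB n⟩
    have hne : T.Nonempty := ⟨τ n, hτT⟩
    have hlow : ∀ s ∈ T, ap (u n) + εn ≤ s := by
      intro s hs
      by_contra h
      push_neg at h
      exact houtn s (Or.inr ⟨hs.1, h⟩) hs.2
    have hbdd : BddBelow T := ⟨ap (u n) + εn, hlow⟩
    set t := sInf T with ht
    have ht1 : ap (u n) < t := lt_of_lt_of_le (by linarith) (le_csInf hne hlow)
    have ht2 : t < ap (u n) + 1 / ((n : ℝ) + 1) :=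
      lt_of_le_of_lt (csInf_le hbdd hτT) (hτ n).2
    have htB : Φ t (u n) ∈ B := by
      have hclosed : IsClosed {s : ℝ | Φ s (u n) ∈ B} := by
        have : Continuous fun s : ℝ => Φ s (u n) :=
          hcont.comp (continuous_id.prodMk continuous_const)
        exact hBcl.preimage this
      have : t ∈ closure T := csInf_mem_closure hne hbdd
      exact closure_minimal (fun s hs => hs.2) hclosed this
    have hmin : ∀ σ, ap (u n) < σ → σ < t → Φ σ (u n) ∉ B := by
      intro σ h1 h2 hσB
      exact absurd (csInf_le hbdd ⟨h1, hσB⟩) (not_le.mpr h2)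
    obtain ⟨hAy, hPy, hly, hIccy, _⟩ := hdata (Φ t (u n)) htB
    have hay0 : am (Φ t (u n)) = 0 := by
      by_contra h
      have hlt : am (Φ t (u n)) < 0 := lt_of_le_of_ne hAy h
      set m := max (am (Φ t (u n))) (ap (u n) - t) with hm
      have hm0 : m < 0 := max_lt hlt (by linarith)
      have hmaxl := le_max_left (am (Φ t (u n))) (ap (u n) - t)
      have hmaxr := le_max_right (am (Φ t (u n))) (ap (u n) - t)
      have hmem : m / 2 ∈ Set.Icc (am (Φ t (u n))) (ap (Φ t (u n))) :=
        ⟨by linarith, by linarith⟩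
      have hstep : Φ (m / 2 + t) (u n) ∈ B := by
        rw [hadd]; exact hIccy _ hmem
      have h1 : ap (u n) < m / 2 + t := by linarith
      have h2 : m / 2 + t < t := by linarith
      exact hmin _ h1 h2 hstep
    refine ⟨t, ht1, ht2, ?_⟩
    intro σ hσ
    have : Φ σ (u n) = Φ (σ - t) (Φ t (u n)) := by
      rw [← hadd]; ring_nf
    rw [this]
    refine hIccy _ ⟨by rw [hay0]; linarith [hσ.1], ?_⟩
    have : ap (Φ t (u n)) = l := by rw [hay0] at hly; linarith
    rw [this]; linarith [hσ.2]
  choose t ht1 ht2 hcov using FR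
  -- subsequence along which everything converges
  have hKmem : ∀ n, ((u n, (am (u n), ap (u n))) : X × ℝ × ℝ) ∈
      B ×ˢ (Set.Icc (-l) 0 ×ˢ Set.Icc 0 l) := by
    intro n
    obtain ⟨hAn, hPn, hln, _, _⟩ := hdata (u n) (hu n)
    exact ⟨hu n, ⟨by linarith, hAn⟩, ⟨hPn, by linarith⟩⟩
  obtain ⟨⟨x, b, a⟩, hK, φ, hφ, htend⟩ :=
    (hBc.prod (isCompact_Icc.prod isCompact_Icc)).tendsto_subseq hKmem
  obtain ⟨hxB, ⟨hbl, hb0⟩, ⟨ha0, hal⟩⟩ := hK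
  have hux : Filter.Tendsto (fun n => u (φ n)) Filter.atTop (nhds x) :=
    (continuous_fst.tendsto _).comp htend
  have hama : Filter.Tendsto (fun n => am (u (φ n))) Filter.atTop (nhds b) :=
    ((continuous_fst.comp continuous_snd).tendsto _).comp htend
  have hapa : Filter.Tendsto (fun n => ap (u (φ n))) Filter.atTop (nhds a) :=
    ((continuous_snd.comp continuous_snd).tendsto _).comp htend
  have hlab : a - b = l := by
    have h1 : Filter.Tendsto (fun n => ap (u (φ n)) - am (u (φ n)))
        Filter.atTop (nhds (a - b)) := hapa.sub hama
    have h2 : (fun n => ap (u (φ n)) - am (u (φ n))) = fun _ => l := by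
      funext n
      obtain ⟨_, _, hln, _, _⟩ := hdata (u (φ n)) (hu (φ n))
      linarith
    rw [h2] at h1
    exact (tendsto_nhds_unique h1 tendsto_const_nhds)
  have hIccBa : ∀ σ ∈ Set.Icc b a, Φ σ x ∈ B := by
    refine box_limit_Icc hcont hBcl hux hama hapa ?_ ?_
    · intro n
      obtain ⟨hAn, hPn, _, _, _⟩ := hdata (u (φ n)) (hu (φ n))
      linarith
    · intro n σ hσ
      obtain ⟨_, _, _, hIccn, _⟩ := hdata (u (φ n)) (hu (φ n))
      exact hIccn σ hσ
  have huniq := box_data_unique (hdata x hxB) hb0 ha0 hlab hIccBa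
  -- t (φ n) → a
  have hone : Filter.Tendsto (fun n : ℕ => 1 / ((φ n : ℝ) + 1)) Filter.atTop (nhds 0) := by
    have h0 : Filter.Tendsto (fun n : ℕ => 1 / ((n : ℝ) + 1)) Filter.atTop (nhds 0) :=
      tendsto_one_div_add_atTop_nhds_zero_nat
    exact h0.comp hφ.tendsto_atTop
  have hta : Filter.Tendsto (fun n => t (φ n)) Filter.atTop (nhds a) := by
    have hup : Filter.Tendsto (fun n => ap (u (φ n)) + 1 / ((φ n : ℝ) + 1))
        Filter.atTop (nhds a) := by
      have := hapa.add hone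
      simpa using this
    exact tendsto_of_tendsto_of_tendsto_of_le_of_le hapa hup
      (fun n => le_of_lt (ht1 (φ n))) (fun n => le_of_lt (ht2 (φ n)))
  have hIccta : ∀ σ ∈ Set.Icc a (a + l), Φ σ x ∈ B := by
    have hbb : Filter.Tendsto (fun n => t (φ n) + l) Filter.atTop (nhds (a + l)) :=
      hta.add tendsto_const_nhds
    exact box_limit_Icc hcont hBcl hux hta hbb (fun n => by linarith)
      (fun n σ hσ => hcov (φ n) σ hσ)
  -- contradiction at x
  obtain ⟨_, _, _, _, ε, hε, hout⟩ := hdata x hxB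
  set σ := ap x + min l ε / 2 with hσdef
  have hminpos : 0 < min l ε := lt_min hl hε
  have h1 : σ ∈ Set.Ioo (ap x) (ap x + ε) :=
    ⟨by simp only [hσdef]; linarith, by have := min_le_right l ε; simp only [hσdef]; linarith⟩
  have h2 : σ ∈ Set.Icc a (a + l) := by
    have := min_le_left l ε
    constructor <;> simp only [hσdef, huniq.1] <;> linarith
  exact hout σ (Or.inr h1) (hIccta σ h2)

/-- Box data for the time-reversed flow. -/
lemma box_data_rev {X : Type*} {Φ : ℝ → X → X} {B : Set X} {l : ℝ} {x : X} {A P : ℝ}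
    (h : IsBoxData Φ B l x A P) : IsBoxData (fun τ y => Φ (-τ) y) B l x (-P) (-A) := by
  obtain ⟨h1, h2, h3, h4, ε, hε, h5⟩ := h
  refine ⟨by linarith, by linarith, by linarith, ?_, ε, hε, ?_⟩
  · intro τ hτ
    exact h4 (-τ) ⟨by linarith [hτ.2], by linarith [hτ.1]⟩
  · intro τ hτ
    rcases hτ with ⟨h6, h7⟩ | ⟨h6, h7⟩
    · exact h5 (-τ) (Or.inr ⟨by linarith, by linarith⟩)
    · exact h5 (-τ) (Or.inl ⟨by linarith, by linarith⟩)

/-- Lemma 2.6(5): there is a uniform `ε_B > 0` such that the numbers `ε(x)` in the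
definition of a box can be chosen with `ε(x) ≥ ε_B` for all `x ∈ B`. -/
theorem box_uniform_epsilon
    (G X : Type*) [Group G] [TopologicalSpace X] [TopologicalSpace.MetrizableSpace X]
    [MulAction G X] [ContinuousConstSMul G X]
    (hproper : IsProperAction G X) (hcocompact : IsCocompactAction G X)
    (Φ : ℝ → X → X) (hflow : IsEquivariantFlow G Φ)
    (B : Set X) (l : ℝ) (hB : IsBox G Φ B l)
    (am ap : X → ℝ) (hdata : ∀ x ∈ B, IsBoxData Φ B l x (am x) (ap x)) :
    ∃ εB : ℝ, 0 < εB ∧ ∀ x ∈ B,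
      ∀ τ ∈ Set.Ioo (am x - εB) (am x) ∪ Set.Ioo (ap x) (ap x + εB), Φ τ x ∉ B := by
  obtain ⟨hBc, _, hl, _⟩ := hB
  obtain ⟨hcont, _, hadd, _⟩ := hflow
  obtain ⟨εp, hεp, hplus⟩ :=
    box_uniform_epsilon_plus Φ hcont hadd B hBc l hl am ap hdata
  have hcont' : Continuous fun p : ℝ × X => Φ (-p.1) p.2 :=
    hcont.comp ((continuous_neg.comp continuous_fst).prodMk continuous_snd)
  have hadd' : ∀ s t : ℝ, ∀ x : X, Φ (-(s + t)) x = Φ (-s) (Φ (-t) x) := by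
    intro s t x
    rw [neg_add]
    exact hadd (-s) (-t) x
  obtain ⟨εm, hεm, hminus⟩ :=
    box_uniform_epsilon_plus (fun τ y => Φ (-τ) y) hcont' hadd' B hBc l hl
      (fun x => -(ap x)) (fun x => -(am x)) (fun x hx => box_data_rev (hdata x hx))
  refine ⟨min εp εm, lt_min hεp hεm, ?_⟩
  intro x hx τ hτ
  rcases hτ with ⟨h1, h2⟩ | ⟨h1, h2⟩
  · have h3 : -τ ∈ Set.Ioo (-(am x)) (-(am x) + εm) := by
      have := min_le_right εp εm
      constructor <;> linarith
    have := hminus x hx (-τ) h3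
    simpa using this
  · have h3 : τ ∈ Set.Ioo (ap x) (ap x + εp) := by
      have := min_le_left εp εm
      constructor <;> linarith
    exact hplus x hx τ h3
end

section
/- Let C be a box of length l_C and let B be a box with B ⊆ C. Then for every x ∈ S_B there exists a closed neighborhood U ⊆ S_B of x in S_B such that: (1) U is invariant under the isotropy group G_x = {g ∈ G : gx = x} and U is a Fin-subset of the G_B-space S_B; (2) U is transversal to the flow with respect to C, i.e. for every y ∈ S_C the set {τ ∈ [−l_C/2, l_C/2] : Φ_τ(y) ∈ U} has at most one element. -/
open Pointwise

/-- The central slice `S_B = {x ∈ B | a₋(x) + a₊(x) = 0}` of a box `B` of length `l`. -/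
def boxSlice {X : Type*} (Φ : ℝ → X → X) (B : Set X) (l : ℝ) : Set X :=
  {x ∈ B | ∃ am ap : ℝ, IsBoxData Φ B l x am ap ∧ am + ap = 0}

/-- `S` is transversal to the flow with respect to a box `C` of length `lC`: every flow
line through a point of the central slice of `C` meets `S` in at most one time
`τ ∈ [-lC/2, lC/2]`. -/
def TransversalToFlow {X : Type*} (Φ : ℝ → X → X) (S C : Set X) (lC : ℝ) : Prop :=
  ∀ y ∈ boxSlice Φ C lC, {τ : ℝ | τ ∈ Set.Icc (-(lC/2)) (lC/2) ∧ Φ τ y ∈ S}.Subsingleton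

namespace TransversalAux

variable {X : Type*} (Φ : ℝ → X → X)

lemma slice_mem_data {B : Set X} {l : ℝ} {z : X} (hz : z ∈ boxSlice Φ B l) :
    IsBoxData Φ B l z (-(l/2)) (l/2) := by
  obtain ⟨hzB, am, ap, hd, hsum⟩ := hz
  have hlen := hd.2.2.1
  have h1 : ap = l/2 := by linarith
  have h2 : am = -(l/2) := by linarith
  rw [h1, h2] at hd; exact hd

lemma no_small_gap {B : Set X} {l : ℝ}
    (hadd : ∀ s t : ℝ, ∀ x : X, Φ (s + t) x = Φ s (Φ t x))
    {z : X} (hz : z ∈ boxSlice Φ B l) {p : ℝ} (hp0 : 0 < p) (hpl : p ≤ l)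
    (hw : Φ p z ∈ boxSlice Φ B l) : False := by
  obtain ⟨_, _, _, hin, ε, hε, hout⟩ := slice_mem_data Φ hz
  obtain ⟨_, _, _, hin', -⟩ := slice_mem_data Φ hw
  have hminpos : 0 < min ε p := lt_min hε hp0
  have hm1 : min ε p ≤ ε := min_le_left _ _
  have hm2 : min ε p ≤ p := min_le_right _ _
  obtain ⟨τ, hτ⟩ : ∃ τ : ℝ, τ = l/2 + min ε p / 2 := ⟨_, rfl⟩
  have h1 : Φ τ z ∉ B :=
    hout τ (Or.inr (Set.mem_Ioo.mpr ⟨by linarith, by linarith⟩))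
  have h2 : Φ τ z ∈ B := by
    have e : Φ τ z = Φ (τ - p) (Φ p z) := by
      rw [← hadd]; congr 1; ring
    rw [e]
    exact hin' _ (Set.mem_Icc.mpr ⟨by linarith, by linarith⟩)
  exact h1 h2

lemma no_periodic {C : Set X} {l : ℝ}
    (hadd : ∀ s t : ℝ, ∀ x : X, Φ (s + t) x = Φ s (Φ t x))
    (hdata : ∀ z ∈ C, ∃ am ap : ℝ, IsBoxData Φ C l z am ap)
    {z : X} (hz : z ∈ C) {p : ℝ} (hp0 : 0 < p) (hpl : p ≤ l)
    (hper : Φ p z = z) : False := by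
  obtain ⟨am, ap, ham, hap, hlen, hin, ε, hε, hout⟩ := hdata z hz
  have hminpos : 0 < min ε p := lt_min hε hp0
  have hm1 : min ε p ≤ ε := min_le_left _ _
  have hm2 : min ε p ≤ p := min_le_right _ _
  obtain ⟨τ, hτ⟩ : ∃ τ : ℝ, τ = ap + min ε p / 2 := ⟨_, rfl⟩
  have h1 : Φ τ z ∉ C :=
    hout τ (Or.inr (Set.mem_Ioo.mpr ⟨by linarith, by linarith⟩))
  have h2 : Φ τ z ∈ C := by
    have e : Φ τ z = Φ (τ - p) z := by
      conv_rhs => rw [← hper]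
      rw [← hadd]; congr 1; ring
    rw [e]
    exact hin _ (Set.mem_Icc.mpr ⟨by linarith, by linarith⟩)
  exact h1 h2

lemma mem_slice_iff {B : Set X} {l : ℝ} (hl : 0 < l)
    (hdata : ∀ z ∈ B, ∃ am ap : ℝ, IsBoxData Φ B l z am ap)
    (z : X) :
    z ∈ boxSlice Φ B l ↔ z ∈ B ∧ ∀ τ ∈ Set.Icc (-(l/2)) (l/2), Φ τ z ∈ B := by
  constructor
  · intro hz; exact ⟨hz.1, (slice_mem_data Φ hz).2.2.2.1⟩
  · rintro ⟨hzB, hin⟩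
    obtain ⟨am, ap, ham, hap, hlen, hin', ε, hε, hout⟩ := hdata z hzB
    have hap2 : l/2 ≤ ap := by
      by_contra h; push_neg at h
      have hminpos : 0 < min ε (l/2 - ap) := lt_min hε (by linarith)
      have hm1 : min ε (l/2 - ap) ≤ ε := min_le_left _ _
      have hm2 : min ε (l/2 - ap) ≤ l/2 - ap := min_le_right _ _
      refine hout (ap + min ε (l/2 - ap) / 2) (Or.inr ⟨by linarith, by linarith⟩)
        (hin _ ⟨by linarith, by linarith⟩)
    have ham2 : am ≤ -(l/2) := by
      by_contra h; push_neg at h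
      have hminpos : 0 < min ε (am + l/2) := lt_min hε (by linarith)
      have hm1 : min ε (am + l/2) ≤ ε := min_le_left _ _
      have hm2 : min ε (am + l/2) ≤ am + l/2 := min_le_right _ _
      refine hout (am - min ε (am + l/2) / 2) (Or.inl ⟨by linarith, by linarith⟩)
        (hin _ ⟨by linarith, by linarith⟩)
    have e1 : ap = l/2 := by linarith
    have e2 : am = -(l/2) := by linarith
    exact ⟨hzB, am, ap, ⟨ham, hap, hlen, hin', ε, hε, hout⟩, by linarith⟩

lemma slice_closed [TopologicalSpace X] {B : Set X} {l : ℝ} (hl : 0 < l)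
    (hcont : Continuous fun p : ℝ × X => Φ p.1 p.2)
    (hBclosed : IsClosed B)
    (hdata : ∀ z ∈ B, ∃ am ap : ℝ, IsBoxData Φ B l z am ap) :
    IsClosed (boxSlice Φ B l) := by
  have he : boxSlice Φ B l
      = B ∩ ⋂ τ ∈ Set.Icc (-(l/2)) (l/2), (fun z => Φ τ z) ⁻¹' B := by
    ext z
    rw [mem_slice_iff Φ hl hdata]
    simp [Set.mem_iInter]
  rw [he]
  exact hBclosed.inter (isClosed_biInter fun τ _ =>
    hBclosed.preimage (hcont.comp (continuous_const.prodMk continuous_id)))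

lemma smul_mem_slice {G : Type*} [Group G] [MulAction G X]
    {B : Set X} {l : ℝ}
    (hequiv : ∀ (g : G) (τ : ℝ) (x : X), Φ τ (g • x) = g • Φ τ x)
    {g : G} (hgB : g • B = B) {z : X} (hz : z ∈ boxSlice Φ B l) :
    g • z ∈ boxSlice Φ B l := by
  obtain ⟨hzB, am, ap, ⟨ham, hap, hlen, hin, ε, hε, hout⟩, hsum⟩ := hz
  have hmem : ∀ w : X, w ∈ B ↔ g • w ∈ B := by
    intro w
    constructor
    · intro hw; rw [← hgB]; exact Set.smul_mem_smul_set hw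
    · intro hw; rw [← hgB] at hw; exact (Set.smul_mem_smul_set_iff).mp hw
  refine ⟨(hmem z).1 hzB, am, ap, ⟨ham, hap, hlen, ?_, ε, hε, ?_⟩, hsum⟩
  · intro τ hτ; rw [hequiv]; exact (hmem _).1 (hin τ hτ)
  · intro τ hτ h; rw [hequiv] at h; exact hout τ hτ ((hmem _).2 h)

lemma sep_finite {G : Type*} [Group G] [MetricSpace X] [MulAction G X]
    [ContinuousConstSMul G X] (x : X) (s : Set G) (hs : s.Finite)
    (hne : ∀ g ∈ s, g • x ≠ x) :
    ∃ δ : ℝ, 0 < δ ∧ ∀ g ∈ s, ∀ z ∈ Metric.closedBall x δ,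
      ∀ w ∈ Metric.closedBall x δ, g • w ≠ z := by
  have hO : IsOpen (⋂ g ∈ s, {p : X × X | g • p.2 ≠ p.1}) :=
    hs.isOpen_biInter fun g _ =>
      (isClosed_eq ((continuous_const_smul g).comp continuous_snd) continuous_fst).isOpen_compl
  have hmem : (x, x) ∈ ⋂ g ∈ s, {p : X × X | g • p.2 ≠ p.1} := by
    simp only [Set.mem_iInter, Set.mem_setOf_eq]
    exact fun g hg => hne g hg
  obtain ⟨ε, hε, hball⟩ := Metric.isOpen_iff.mp hO _ hmem
  refine ⟨ε/2, by positivity, fun g hg z hz w hw hgw => ?_⟩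
  have hmem2 : (z, w) ∈ Metric.ball (x, x) ε := by
    rw [Metric.mem_ball, Prod.dist_eq]
    simp only [Metric.mem_closedBall] at hz hw
    exact lt_of_le_of_lt (max_le hz hw) (by linarith)
  have h3 := hball hmem2
  simp only [Set.mem_iInter, Set.mem_setOf_eq] at h3
  exact h3 g hg hgw

lemma transversal_radius [MetricSpace X] (Φ : ℝ → X → X)
    (hcont : Continuous fun p : ℝ × X => Φ p.1 p.2)
    {C : Set X} {lC lB : ℝ} (hlB : 0 < lB)
    (hdataC : ∀ z ∈ C, ∃ am ap : ℝ, IsBoxData Φ C lC z am ap)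
    (hadd : ∀ s t : ℝ, ∀ x : X, Φ (s + t) x = Φ s (Φ t x))
    {x : X} (hxC : x ∈ C) :
    ∃ δ : ℝ, 0 < δ ∧ ∀ z ∈ Metric.closedBall x δ, ∀ p : ℝ, lB ≤ p → p ≤ lC →
      Φ p z ∉ Metric.closedBall x δ := by
  by_contra hcon
  push_neg at hcon
  have hf : ∀ n : ℕ, (0:ℝ) < 1/(n+1) := fun n => by positivity
  choose z hz p hp1 hp2 hw using fun n : ℕ => hcon (1/(n+1)) (hf n)
  have hpmem : ∀ n, p n ∈ Set.Icc lB lC := fun n => ⟨hp1 n, hp2 n⟩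
  obtain ⟨p₀, hp₀, φ, hφ, hpt⟩ := (isCompact_Icc (a := lB) (b := lC)).tendsto_subseq hpmem
  have hfz : Filter.Tendsto (fun n : ℕ => (1:ℝ)/(n+1)) Filter.atTop (nhds 0) :=
    tendsto_one_div_add_atTop_nhds_zero_nat
  have hzt : Filter.Tendsto z Filter.atTop (nhds x) := by
    rw [tendsto_iff_dist_tendsto_zero]
    exact squeeze_zero (fun n => dist_nonneg) (fun n => Metric.mem_closedBall.mp (hz n)) hfz
  have hzφ : Filter.Tendsto (z ∘ φ) Filter.atTop (nhds x) :=
    hzt.comp hφ.tendsto_atTop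
  have ht1 : Filter.Tendsto (fun n => Φ (p (φ n)) (z (φ n))) Filter.atTop (nhds (Φ p₀ x)) :=
    (hcont.tendsto (p₀, x)).comp (hpt.prodMk_nhds hzφ)
  have ht2 : Filter.Tendsto (fun n => Φ (p (φ n)) (z (φ n))) Filter.atTop (nhds x) := by
    rw [tendsto_iff_dist_tendsto_zero]
    refine squeeze_zero (fun n => dist_nonneg)
      (fun n => Metric.mem_closedBall.mp (hw (φ n))) (hfz.comp hφ.tendsto_atTop)
  have hper : Φ p₀ x = x := tendsto_nhds_unique ht1 ht2
  exact no_periodic Φ hadd hdataC hxC (lt_of_lt_of_le hlB hp₀.1) hp₀.2 hper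


end TransversalAux

open TransversalAux in
/-- Lemma 2.13: for boxes `B ⊆ C`, every point of `S_B` has a closed `G_x`-invariant
neighborhood in `S_B` which is a `Fin`-subset of the `G_B`-space `S_B` and transversal
to the flow with respect to `C`. -/
theorem transversal_neighborhood
    (G X : Type*) [Group G] [TopologicalSpace X] [TopologicalSpace.MetrizableSpace X]
    [MulAction G X] [ContinuousConstSMul G X]
    (hproper : IsProperAction G X) (hcocompact : IsCocompactAction G X)
    (Φ : ℝ → X → X) (hflow : IsEquivariantFlow G Φ)
    (C : Set X) (lC : ℝ) (hC : IsBox G Φ C lC)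
    (B : Set X) (lB : ℝ) (hB : IsBox G Φ B lB) (hBC : B ⊆ C)
    (x : X) (hx : x ∈ boxSlice Φ B lB) :
    ∃ U : Set X, U ⊆ boxSlice Φ B lB ∧ IsClosed U ∧
      (∃ V : Set X, IsOpen V ∧ x ∈ V ∧ V ∩ boxSlice Φ B lB ⊆ U) ∧
      (∀ g : G, g • x = x → g • U = U) ∧
      {g : G | g • B = B ∧ g • U = U}.Finite ∧
      (∀ g : G, g • B = B → ((g • U) ∩ U).Nonempty → g • U = U) ∧
      TransversalToFlow Φ U C lC := by
  letI : MetricSpace X := TopologicalSpace.metrizableSpaceMetric X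
  obtain ⟨hcont, hzero, hadd, hequiv⟩ := hflow
  obtain ⟨hCcomp, hCfin, hlC, hCdata⟩ := hC
  obtain ⟨hBcomp, hBfin, hlB, hBdata⟩ := hB
  -- properness at x
  obtain ⟨W, hWopen, hxW, hFfin⟩ := hproper x
  set T : Set G := {g : G | g • x = x} with hTdef
  have hTinv : ∀ g ∈ T, g⁻¹ ∈ T := by
    intro g hg
    simp only [hTdef, Set.mem_setOf_eq] at hg ⊢
    exact inv_smul_eq_iff.mpr hg.symm
  have hTmul : ∀ g ∈ T, ∀ h ∈ T, g * h ∈ T := by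
    intro g hg h hh
    simp only [hTdef, Set.mem_setOf_eq] at hg hh ⊢
    rw [mul_smul, hh, hg]
  have hTone : (1 : G) ∈ T := by simp [hTdef]
  have hTsub : T ⊆ {g : G | ((g • W) ∩ W).Nonempty} := by
    intro g hg
    refine ⟨x, ?_, hxW⟩
    rw [Set.mem_smul_set_iff_inv_smul_mem]
    have h1 : g⁻¹ ∈ T := hTinv g hg
    simp only [hTdef, Set.mem_setOf_eq] at h1
    rw [h1]; exact hxW
  have hTfin : T.Finite := hFfin.subset hTsub
  -- δ₀ : closed ball inside W
  obtain ⟨δ₀, hδ₀, hδ₀W⟩ : ∃ δ₀ : ℝ, 0 < δ₀ ∧ Metric.closedBall x δ₀ ⊆ W := by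
    obtain ⟨ε, hε, hb⟩ := Metric.isOpen_iff.mp hWopen x hxW
    exact ⟨ε/2, by positivity, (Metric.closedBall_subset_ball (by linarith)).trans hb⟩
  -- δ₁ : transversal radius
  have hxB : x ∈ B := hx.1
  have hxC : x ∈ C := hBC hxB
  obtain ⟨δ₁, hδ₁, hδ₁P⟩ := transversal_radius Φ hcont hlB hCdata hadd hxC
  -- δ₂ : separation from non-stabilizing elements
  obtain ⟨δ₂, hδ₂, hδ₂P⟩ := sep_finite x ({g : G | ((g • W) ∩ W).Nonempty} \ T)
    (hFfin.subset Set.diff_subset) (fun g hg => hg.2)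
  obtain ⟨δ, hδdef⟩ : ∃ δ : ℝ, δ = min δ₀ (min δ₁ δ₂) := ⟨_, rfl⟩
  have hδ : 0 < δ := by rw [hδdef]; positivity
  have hδ0' : δ ≤ δ₀ := by rw [hδdef]; exact min_le_left _ _
  have hδ1' : δ ≤ δ₁ := by rw [hδdef]; exact (min_le_right _ _).trans (min_le_left _ _)
  have hδ2' : δ ≤ δ₂ := by rw [hδdef]; exact (min_le_right _ _).trans (min_le_right _ _)
  set CB : Set X := Metric.closedBall x δ with hCBdef
  set S : Set X := boxSlice Φ B lB with hSdef
  have hSclosed : IsClosed S := slice_closed Φ hlB hcont hBcomp.isClosed hBdata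
  set U : Set X := S ∩ ⋂ g ∈ T, g • CB with hUdef
  have hUS : U ⊆ S := Set.inter_subset_left
  have hUCB : U ⊆ CB := by
    intro w hw
    have h2 := hw.2
    rw [Set.mem_iInter₂] at h2
    have := h2 1 hTone
    rwa [one_smul] at this
  -- membership transfer under T
  have hstabB : ∀ g ∈ T, g • B = B := by
    intro g hg
    simp only [hTdef, Set.mem_setOf_eq] at hg
    refine hBfin.2 g ⟨x, ⟨x, hxB, hg⟩, hxB⟩
  have hUsmul : ∀ h ∈ T, ∀ z ∈ U, h • z ∈ U := by
    intro h hh z hz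
    refine ⟨smul_mem_slice Φ hequiv (hstabB h hh) hz.1, ?_⟩
    rw [Set.mem_iInter₂]
    intro g hg
    rw [Set.mem_smul_set_iff_inv_smul_mem, smul_smul]
    have hz2 := hz.2
    rw [Set.mem_iInter₂] at hz2
    have hmem := hz2 (h⁻¹ * g) (hTmul _ (hTinv h hh) _ hg)
    rw [Set.mem_smul_set_iff_inv_smul_mem] at hmem
    rwa [mul_inv_rev, inv_inv] at hmem
  have hUinv : ∀ h ∈ T, h • U = U := by
    intro h hh
    apply Set.Subset.antisymm
    · rintro _ ⟨z, hz, rfl⟩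
      exact hUsmul h hh z hz
    · intro z hz
      rw [Set.mem_smul_set_iff_inv_smul_mem]
      exact hUsmul h⁻¹ (hTinv h hh) z hz
  have hUclosed : IsClosed U :=
    hSclosed.inter (isClosed_biInter fun g _ => Metric.isClosed_closedBall.smul g)
  -- the open neighborhood V
  refine ⟨U, hUS, hUclosed, ⟨⋂ g ∈ T, g • Metric.ball x δ, ?_, ?_, ?_⟩, ?_, ?_, ?_, ?_⟩
  · exact hTfin.isOpen_biInter fun g _ => Metric.isOpen_ball.smul g
  · rw [Set.mem_iInter₂]
    intro g hg
    rw [Set.mem_smul_set_iff_inv_smul_mem]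
    have h1 : g⁻¹ ∈ T := hTinv g hg
    simp only [hTdef, Set.mem_setOf_eq] at h1
    rw [h1]
    exact Metric.mem_ball_self hδ
  · rintro z ⟨hzV, hzS⟩
    refine ⟨hzS, ?_⟩
    rw [Set.mem_iInter₂] at hzV ⊢
    exact fun g hg => Set.smul_set_mono Metric.ball_subset_closedBall (hzV g hg)
  · exact fun g hg => hUinv g hg
  · exact hBfin.1.subset fun g hg => hg.1
  · -- Fin-subset property
    rintro g hgB ⟨z, hz1, hz2⟩
    have hz1' : g⁻¹ • z ∈ U := by
      rwa [← Set.mem_smul_set_iff_inv_smul_mem]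
    by_cases hgT : g ∈ T
    · exact hUinv g hgT
    · exfalso
      have hzW : z ∈ W := hδ₀W (Metric.closedBall_subset_closedBall hδ0' (hUCB hz2))
      have hzgW : z ∈ g • W := by
        rw [Set.mem_smul_set_iff_inv_smul_mem]
        exact hδ₀W (Metric.closedBall_subset_closedBall hδ0' (hUCB hz1'))
      refine hδ₂P g ⟨⟨z, hzgW, hzW⟩, hgT⟩ z
        (Metric.closedBall_subset_closedBall hδ2' (hUCB hz2)) (g⁻¹ • z)
        (Metric.closedBall_subset_closedBall hδ2' (hUCB hz1')) (by rw [smul_inv_smul])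
  · -- transversality
    intro y _ τ₁ h1 τ₂ h2
    have key : ∀ σ₁ σ₂ : ℝ, σ₁ ∈ Set.Icc (-(lC/2)) (lC/2) → σ₂ ∈ Set.Icc (-(lC/2)) (lC/2) →
        Φ σ₁ y ∈ U → Φ σ₂ y ∈ U → σ₁ < σ₂ → False := by
      intro σ₁ σ₂ hσ1 hσ2 hu1 hu2 hlt
      obtain ⟨p, hpdef⟩ : ∃ p : ℝ, p = σ₂ - σ₁ := ⟨_, rfl⟩
      have hp0 : 0 < p := by rw [hpdef]; linarith
      have hplC : p ≤ lC := by
        have ha := hσ1.1; have hb := hσ2.2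
        rw [hpdef]; linarith
      have heq : Φ σ₂ y = Φ p (Φ σ₁ y) := by
        rw [← hadd]; congr 1; rw [hpdef]; ring
      by_cases hpB : p ≤ lB
      · exact no_small_gap Φ hadd (hUS hu1) hp0 hpB (heq ▸ hUS hu2)
      · push_neg at hpB
        refine hδ₁P (Φ σ₁ y) (Metric.closedBall_subset_closedBall hδ1' (hUCB hu1))
          p hpB.le hplC ?_
        rw [← heq]
        exact Metric.closedBall_subset_closedBall hδ1' (hUCB hu2)
    rcases lt_trichotomy τ₁ τ₂ with h | h | h
    · exact absurd (key τ₁ τ₂ h1.1 h2.1 h1.2 h2.2 h) not_false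
    · exact h
    · exact absurd (key τ₂ τ₁ h2.1 h1.1 h2.2 h1.2 h) not_false
end

section
/- Let G be a discrete group, X a metrizable topological space with a proper cocompact G-action, and Φ a G-equivariant flow on X with X − X^ℝ locally connected. Suppose x ∈ X is contained in the interior of some non-equivariant box. Then there exists a box B (in the equivariant sense) satisfying: (1) G_B = G_{S_B} = G_x, the isotropy group of x; (2) x ∈ S_B ∩ B°; (3) the central slice S_B is connected. -/
open Pointwise

def flowFixed {X : Type*} (Φ : ℝ → X → X) : Set X := {x | ∀ τ : ℝ, Φ τ x = x}

def IsNonequivariantBox {X : Type*} [TopologicalSpace X]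
    (Φ : ℝ → X → X) (B : Set X) (l : ℝ) : Prop :=
  IsCompact B ∧ 0 < l ∧ ∀ x ∈ B, ∃ am ap : ℝ, IsBoxData Φ B l x am ap

/-! The entry time `a₋` of the given non-equivariant box is continuous at interior points and
satisfies `a₋(Φ_w q) = a₋(q) - w`. Averaging it over the finite isotropy group `G_x` gives,
near `x`, a `G_x`-invariant function `s` with `s(Φ_w q) = s(q) - w`, so `q ↦ Φ_{s q} q` is a
`G_x`-equivariant retraction onto the level set `s = 0`. Local connectedness of `X − X^ℝ`
provides a small connected open `G_x`-invariant neighbourhood `D` of `x`, and the closure `N` of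
its image under the retraction is a compact connected `G_x`-invariant transversal. The tube
`Φ([-δ, δ] × N)` is a box with central slice `N`, and for small `δ` properness makes it disjoint
from its translates by elements outside `G_x`. -/

open Set Filter Topology

section BoxData

variable {X : Type*} {Φ : ℝ → X → X} {B : Set X} {l : ℝ}

theorem IsBoxData.right_le {y : X} {am ap am' ap' : ℝ}
    (h : IsBoxData Φ B l y am ap) (h' : IsBoxData Φ B l y am' ap') : ap ≤ ap' := by
  by_contra! hlt
  obtain ⟨ham, -, -, hmem, -⟩ := h
  obtain ⟨-, hap', -, -, ε, hε, hout⟩ := h'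
  set τ := min (ap' + ε / 2) ((ap' + ap) / 2)
  have hτ₁ : ap' < τ := lt_min (by linarith) (by linarith)
  have hτ₂ : τ < ap' + ε := (min_le_left _ _).trans_lt (by linarith)
  have hτ₃ : τ ≤ ap := (min_le_right _ _).trans (by linarith)
  exact hout τ (Or.inr ⟨hτ₁, hτ₂⟩) (hmem τ ⟨by linarith, hτ₃⟩)

theorem IsBoxData.unique {y : X} {am ap am' ap' : ℝ}
    (h : IsBoxData Φ B l y am ap) (h' : IsBoxData Φ B l y am' ap') : am = am' ∧ ap = ap' := by
  have hap : ap = ap' := (h.right_le h').antisymm (h'.right_le h)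
  exact ⟨by linarith [h.2.2.1, h'.2.2.1], hap⟩

theorem IsBoxData.flow (hadd : ∀ s t : ℝ, ∀ x : X, Φ (s + t) x = Φ s (Φ t x))
    {y : X} {am ap w : ℝ} (h : IsBoxData Φ B l y am ap) (hw : w ∈ Icc am ap) :
    IsBoxData Φ B l (Φ w y) (am - w) (ap - w) := by
  obtain ⟨ham, hap, hl, hmem, ε, hε, hout⟩ := h
  have key : ∀ τ : ℝ, Φ τ (Φ w y) = Φ (τ + w) y := fun τ => (hadd τ w y).symm
  refine ⟨by linarith [hw.1], by linarith [hw.2], by linarith, fun τ hτ => ?_, ε, hε,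
    fun τ hτ => ?_⟩
  · rw [key]
    exact hmem _ ⟨by linarith [hτ.1], by linarith [hτ.2]⟩
  · rw [key]
    rcases hτ with ⟨h₁, h₂⟩ | ⟨h₁, h₂⟩
    · exact hout _ (Or.inl ⟨by linarith, by linarith⟩)
    · exact hout _ (Or.inr ⟨by linarith, by linarith⟩)

open scoped Classical in
/-- The time `a₋(y)`, set to `0` at points without box data. -/
noncomputable def entryTime (Φ : ℝ → X → X) (B : Set X) (l : ℝ) (y : X) : ℝ :=
  if h : ∃ am ap, IsBoxData Φ B l y am ap then h.choose else 0

theorem isBoxData_entryTime {y : X} (h : ∃ am ap, IsBoxData Φ B l y am ap) :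
    IsBoxData Φ B l y (entryTime Φ B l y) (entryTime Φ B l y + l) := by
  rw [entryTime, dif_pos h]
  obtain ⟨ap, hap⟩ := h.choose_spec
  rwa [show ap = h.choose + l by linarith [hap.2.2.1]] at hap

theorem entryTime_eq {y : X} {am ap : ℝ} (h : IsBoxData Φ B l y am ap) :
    entryTime Φ B l y = am :=
  ((isBoxData_entryTime ⟨am, ap, h⟩).unique h).1

theorem entryTime_flow (hadd : ∀ s t : ℝ, ∀ x : X, Φ (s + t) x = Φ s (Φ t x))
    {y : X} (h : ∃ am ap, IsBoxData Φ B l y am ap) {w : ℝ}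
    (hw : w ∈ Icc (entryTime Φ B l y) (entryTime Φ B l y + l)) :
    entryTime Φ B l (Φ w y) = entryTime Φ B l y - w :=
  entryTime_eq ((isBoxData_entryTime h).flow hadd hw)

variable [TopologicalSpace X]

theorem IsBoxData.neg_pos_of_mem_interior (hcont : Continuous fun p : ℝ × X => Φ p.1 p.2)
    (hzero : ∀ x : X, Φ 0 x = x) {p : X} (hp : p ∈ interior B) {am ap : ℝ}
    (h : IsBoxData Φ B l p am ap) : am < 0 ∧ 0 < ap := by
  have hcurve : ContinuousAt (fun t : ℝ => Φ t p) 0 :=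
    (hcont.comp (continuous_id.prodMk continuous_const)).continuousAt
  have hnear : ∀ᶠ t in 𝓝 (0 : ℝ), Φ t p ∈ B :=
    hcurve.preimage_mem_nhds (by rw [hzero]; exact mem_interior_iff_mem_nhds.1 hp)
  obtain ⟨ι, hι, hball⟩ := Metric.eventually_nhds_iff.1 hnear
  obtain ⟨ham, hap, -, -, ε, hε, hout⟩ := h
  obtain ⟨t, ht, htmin⟩ := exists_between (lt_min hε hι)
  rw [lt_min_iff] at htmin
  have hmem : ∀ u : ℝ, |u| = t → Φ u p ∈ B := fun u hu =>
    hball (by rw [Real.dist_eq, sub_zero, hu]; exact htmin.2)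
  constructor
  · refine ham.lt_of_ne fun ham₀ => hout (-t) (Or.inl ⟨by linarith, by linarith⟩) ?_
    exact hmem _ (by rw [abs_neg, abs_of_pos ht])
  · refine hap.lt_of_ne' fun hap₀ => hout t (Or.inr ⟨by linarith, by linarith⟩) ?_
    exact hmem _ (abs_of_pos ht)

theorem continuousAt_entryTime (hcont : Continuous fun p : ℝ × X => Φ p.1 p.2)
    (hB : IsClosed B) (hdata : ∀ y ∈ B, ∃ am ap, IsBoxData Φ B l y am ap)
    {p : X} (hp : p ∈ interior B) : ContinuousAt (entryTime Φ B l) p := by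
  obtain ⟨ham, hap, -, -, ε, hε, hout⟩ := isBoxData_entryTime (hdata p (interior_subset hp))
  set a := entryTime Φ B l p
  have hexit : ∀ t, Φ t p ∉ B → ∀ᶠ q in 𝓝 p, Φ t q ∉ B := fun t ht =>
    (hcont.comp (continuous_const.prodMk continuous_id)).continuousAt.preimage_mem_nhds
      (hB.isOpen_compl.mem_nhds ht)
  rw [ContinuousAt, Metric.tendsto_nhds]
  intro η hη
  obtain ⟨η', hη', hη'min⟩ := exists_between (lt_min hε hη)
  obtain ⟨hη'ε, hη'η⟩ := lt_min_iff.1 hη'min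
  filter_upwards [mem_interior_iff_mem_nhds.1 hp,
    hexit (a + l + η') (hout _ (Or.inr ⟨by linarith, by linarith⟩)),
    hexit (a - η') (hout _ (Or.inl ⟨by linarith, by linarith⟩))] with q hqB hright hleft
  obtain ⟨hamq, hapq, -, hmemq, -⟩ := isBoxData_entryTime (hdata q hqB)
  have h₁ : entryTime Φ B l q + l < a + l + η' :=
    lt_of_not_ge fun h => hright (hmemq _ ⟨by linarith, h⟩)
  have h₂ : a - η' < entryTime Φ B l q :=
    lt_of_not_ge fun h => hleft (hmemq _ ⟨h, by linarith⟩)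
  rw [Real.dist_eq, abs_lt]
  constructor <;> linarith

end BoxData

section OrbitAverage

noncomputable def orbitAverage {X : Type*} (H : Type*) [Group H] [Fintype H] [MulAction H X]
    (f : X → ℝ) (x : X) : ℝ :=
  (Fintype.card H : ℝ)⁻¹ * ∑ h : H, f (h • x)

variable {H X : Type*} [Group H] [Fintype H] [MulAction H X]

theorem orbitAverage_smul (f : X → ℝ) (g : H) (x : X) :
    orbitAverage H f (g • x) = orbitAverage H f x := by
  rw [orbitAverage, orbitAverage,
    Fintype.sum_equiv (Equiv.mulRight g) _ (fun h => f (h • x)) fun h => by simp [mul_smul]]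

theorem orbitAverage_eq_sub {f : X → ℝ} {x y : X} {w : ℝ}
    (h : ∀ h : H, f (h • y) = f (h • x) - w) :
    orbitAverage H f y = orbitAverage H f x - w := by
  have hcard : (Fintype.card H : ℝ) ≠ 0 := Nat.cast_ne_zero.2 Fintype.card_ne_zero
  simp only [orbitAverage, h, Finset.sum_sub_distrib, Finset.sum_const, Finset.card_univ,
    nsmul_eq_mul]
  field_simp

theorem orbitAverage_of_forall_smul_eq (f : X → ℝ) {x : X} (hx : ∀ h : H, h • x = x) :
    orbitAverage H f x = f x := by
  have hcard : (Fintype.card H : ℝ) ≠ 0 := Nat.cast_ne_zero.2 Fintype.card_ne_zero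
  simp only [orbitAverage, hx, Finset.sum_const, Finset.card_univ, nsmul_eq_mul]
  field_simp

theorem ContinuousAt.orbitAverage [TopologicalSpace X] {f : X → ℝ} {x : X}
    (hf : ∀ h : H, ContinuousAt (fun y => f (h • y)) x) :
    ContinuousAt (orbitAverage H f) x :=
  continuousAt_const.mul (tendsto_finsetSum _ fun h _ => hf h)

end OrbitAverage

section InvariantCore

def invariantCore {X : Type*} (H : Type*) [SMul H X] (U : Set X) : Set X :=
  {x | ∀ h : H, h • x ∈ U}

variable {H X : Type*} [Group H] [MulAction H X] {U : Set X}

theorem invariantCore_subset : invariantCore H U ⊆ U := fun x hx => by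
  simpa using hx 1

theorem smul_mem_invariantCore {x : X} (hx : x ∈ invariantCore H U) (g : H) :
    g • x ∈ invariantCore H U := fun h => by
  rw [← mul_smul]
  exact hx _

theorem IsOpen.invariantCore [TopologicalSpace X] [Finite H] [ContinuousConstSMul H X]
    (hU : IsOpen U) : IsOpen (invariantCore H U) := by
  simp only [_root_.invariantCore, ofPred_forall]
  exact isOpen_iInter_of_finite fun h => hU.preimage (continuous_const_smul h)

theorem smul_set_eq_of_forall_smul_mem {S : Set X} (hS : ∀ g : H, ∀ x ∈ S, g • x ∈ S) (g : H) :
    g • S = S :=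
  (smul_set_subset_iff.2 (hS g)).antisymm
    (subset_smul_set_iff.2 (smul_set_subset_iff.2 (hS g⁻¹)))

end InvariantCore

theorem isOpen_connectedComponentIn_of_subset {X : Type*} [TopologicalSpace X] {Y E : Set X}
    [LocallyConnectedSpace Y] (hY : IsOpen Y) (hE : IsOpen E) (hEY : E ⊆ Y) (x : X) :
    IsOpen (connectedComponentIn E x) := by
  rw [isOpen_iff_mem_nhds]
  intro q hq
  have hqE : q ∈ E := connectedComponentIn_subset E x hq
  rw [connectedComponentIn_eq hq]
  let q' : Y := ⟨q, hEY hqE⟩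
  have hE' : IsOpen ((↑) ⁻¹' E : Set Y) := hE.preimage continuous_subtype_val
  have hcomp : (↑) '' connectedComponentIn ((↑) ⁻¹' E : Set Y) q' ∈ 𝓝 q :=
    hY.isOpenMap_subtype_val.image_mem_nhds
      (connectedComponentIn_mem_nhds (hE'.mem_nhds (show q' ∈ _ from hqE)))
  refine mem_of_superset hcomp ?_
  refine (isPreconnected_connectedComponentIn.image _
    continuous_subtype_val.continuousOn).subset_connectedComponentIn
      ⟨q', mem_connectedComponentIn hqE, rfl⟩ ?_
  exact image_subset_iff.2 (connectedComponentIn_subset _ _)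

theorem exists_isOpen_isConnected_invariant_subset {H X : Type*} [Group H] [Finite H]
    [TopologicalSpace X] [MulAction H X] [ContinuousConstSMul H X] {Y : Set X}
    [LocallyConnectedSpace Y] (hY : IsOpen Y) {x : X} (hfix : ∀ h : H, h • x = x) {E : Set X}
    (hE : E ∈ 𝓝 x) (hEY : E ⊆ Y) :
    ∃ D : Set X, IsOpen D ∧ IsConnected D ∧ x ∈ D ∧ D ⊆ E ∧ ∀ h : H, h • D = D := by
  set E' := invariantCore H (interior E)
  have hE'E : E' ⊆ E := invariantCore_subset.trans interior_subset
  have hxE' : x ∈ E' := fun h => by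
    rw [hfix]
    exact mem_interior_iff_mem_nhds.2 hE
  refine ⟨connectedComponentIn E' x,
    isOpen_connectedComponentIn_of_subset hY isOpen_interior.invariantCore (hE'E.trans hEY) x,
    isConnected_connectedComponentIn_iff.2 hxE', mem_connectedComponentIn hxE',
    (connectedComponentIn_subset _ _).trans hE'E, smul_set_eq_of_forall_smul_mem fun h q hq => ?_⟩
  have hsub : (h • ·) '' connectedComponentIn E' x ⊆ connectedComponentIn E' x :=
    (isPreconnected_connectedComponentIn.image _
      (continuous_const_smul h).continuousOn).subset_connectedComponentIn
      ⟨x, mem_connectedComponentIn hxE', hfix h⟩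
      (image_subset_iff.2 fun q hq => smul_mem_invariantCore (connectedComponentIn_subset _ _ hq) h)
  exact hsub ⟨q, hq, rfl⟩

section Flow

variable {X : Type*} {Φ : ℝ → X → X}

theorem eq_flow_sub_of_flow_eq (hzero : ∀ x : X, Φ 0 x = x)
    (hadd : ∀ s t : ℝ, ∀ x : X, Φ (s + t) x = Φ s (Φ t x)) {s t : ℝ} {y z : X}
    (h : Φ s z = Φ t y) : z = Φ (t - s) y := by
  rw [sub_eq_neg_add, hadd, ← h, ← hadd, neg_add_cancel, hzero]

def flowTube (Φ : ℝ → X → X) (δ : ℝ) (N : Set X) : Set X := image2 Φ (Icc (-δ) δ) N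

theorem smul_flowTube {G : Type*} [Group G] [MulAction G X]
    (hequiv : ∀ (g : G) (τ : ℝ) (x : X), Φ τ (g • x) = g • Φ τ x) (g : G) (δ : ℝ) (N : Set X) :
    g • flowTube Φ δ N = flowTube Φ δ (g • N) := by
  simp only [flowTube, ← image_smul, image_image2, image2_image_right, hequiv]

theorem IsCompact.flowTube [TopologicalSpace X] (hcont : Continuous fun p : ℝ × X => Φ p.1 p.2)
    {N : Set X} (hN : IsCompact N) (δ : ℝ) : IsCompact (flowTube Φ δ N) := by
  rw [_root_.flowTube, ← image_prod]
  exact (isCompact_Icc.prod hN).image hcont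

theorem isBoxData_flowTube (hzero : ∀ x : X, Φ 0 x = x)
    (hadd : ∀ s t : ℝ, ∀ x : X, Φ (s + t) x = Φ s (Φ t x)) {N : Set X} {δ : ℝ} (hδ : 0 < δ)
    (htrans : ∀ y ∈ N, ∀ z ∈ N, ∀ w : ℝ, |w| < 3 * δ → Φ w y = z → w = 0)
    {σ : ℝ} (hσ : σ ∈ Icc (-δ) δ) {y : X} (hy : y ∈ N) :
    IsBoxData Φ (flowTube Φ δ N) (2 * δ) (Φ σ y) (-δ - σ) (δ - σ) := by
  obtain ⟨hσ₁, hσ₂⟩ := hσ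
  refine ⟨by linarith, by linarith, by ring, fun τ hτ => ?_, δ, hδ, fun τ hτ hmem => ?_⟩
  · rw [← hadd]
    exact mem_image2_of_mem ⟨by linarith [hτ.1], by linarith [hτ.2]⟩ hy
  · rw [← hadd] at hmem
    obtain ⟨v, ⟨hv₁, hv₂⟩, z, hz, hvz⟩ := hmem
    have hw : |τ + σ - v| < 3 * δ := by
      rw [abs_lt]
      rcases hτ with ⟨h₁, h₂⟩ | ⟨h₁, h₂⟩ <;> constructor <;> linarith
    have := htrans y hy z hz _ hw (eq_flow_sub_of_flow_eq hzero hadd hvz).symm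
    rcases hτ with ⟨h₁, h₂⟩ | ⟨h₁, h₂⟩ <;> linarith

theorem boxSlice_flowTube (hzero : ∀ x : X, Φ 0 x = x)
    (hadd : ∀ s t : ℝ, ∀ x : X, Φ (s + t) x = Φ s (Φ t x)) {N : Set X} {δ : ℝ} (hδ : 0 < δ)
    (htrans : ∀ y ∈ N, ∀ z ∈ N, ∀ w : ℝ, |w| < 3 * δ → Φ w y = z → w = 0) :
    boxSlice Φ (flowTube Φ δ N) (2 * δ) = N := by
  have h₀ : (0 : ℝ) ∈ Icc (-δ) δ := ⟨by linarith, hδ.le⟩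
  ext y
  constructor
  · rintro ⟨⟨σ, hσ, z, hz, rfl⟩, am, ap, hd, hsum⟩
    obtain ⟨rfl, rfl⟩ := hd.unique (isBoxData_flowTube hzero hadd hδ htrans hσ hz)
    obtain rfl : σ = 0 := by linarith
    rwa [hzero]
  · intro hy
    have hd := isBoxData_flowTube hzero hadd hδ htrans h₀ hy
    rw [hzero] at hd
    exact ⟨hzero y ▸ mem_image2_of_mem h₀ hy, _, _, hd, by ring⟩

theorem smul_eq_of_smul_flowTube_inter_nonempty {G : Type*} [Group G] [MulAction G X]
    (hzero : ∀ x : X, Φ 0 x = x) (hadd : ∀ s t : ℝ, ∀ x : X, Φ (s + t) x = Φ s (Φ t x))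
    (hequiv : ∀ (g : G) (τ : ℝ) (x : X), Φ τ (g • x) = g • Φ τ x) {x : X} {V : Set X} {c : ℝ}
    (hsep : ∀ u : ℝ, |u| < c → ∀ q ∈ V, ∀ z ∈ V, ∀ g : G, Φ u q = g • z → g • x = x)
    {N : Set X} (hNV : N ⊆ V) {δ : ℝ} (hδc : 2 * δ < c) {g : G}
    (hg : (g • flowTube Φ δ N ∩ flowTube Φ δ N).Nonempty) : g • x = x := by
  obtain ⟨-, ⟨-, ⟨σ, ⟨hσ₁, hσ₂⟩, z, hz, rfl⟩, rfl⟩, ⟨τ, ⟨hτ₁, hτ₂⟩, y, hy, hyz⟩⟩ := hg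
  beta_reduce at hyz
  rw [← hequiv] at hyz
  refine hsep (τ - σ) ?_ y (hNV hy) z (hNV hz) g (eq_flow_sub_of_flow_eq hzero hadd hyz.symm).symm
  rw [abs_lt]
  constructor <;> linarith

theorem isBox_flowTube {G : Type*} [Group G] [MulAction G X] [TopologicalSpace X]
    (hcont : Continuous fun p : ℝ × X => Φ p.1 p.2) (hzero : ∀ x : X, Φ 0 x = x)
    (hadd : ∀ s t : ℝ, ∀ x : X, Φ (s + t) x = Φ s (Φ t x))
    (hequiv : ∀ (g : G) (τ : ℝ) (x : X), Φ τ (g • x) = g • Φ τ x)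
    {N : Set X} (hN : IsCompact N) {δ : ℝ} (hδ : 0 < δ)
    (htrans : ∀ y ∈ N, ∀ z ∈ N, ∀ w : ℝ, |w| < 3 * δ → Φ w y = z → w = 0)
    {x : X} (hxN : x ∈ N) (hinv : ∀ g : G, g • x = x → g • N = N)
    (hsep : ∀ g : G, (g • flowTube Φ δ N ∩ flowTube Φ δ N).Nonempty → g • x = x)
    (hfin : {g : G | g • x = x}.Finite) :
    IsBox G Φ (flowTube Φ δ N) (2 * δ) ∧
      {g : G | g • flowTube Φ δ N = flowTube Φ δ N} = {g : G | g • x = x} ∧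
      {g : G | g • N = N} = {g : G | g • x = x} := by
  set T := flowTube Φ δ N
  have hxT : x ∈ T := ⟨0, ⟨by linarith, hδ.le⟩, x, hxN, hzero x⟩
  have hT : ∀ g : G, g • T = T ↔ g • x = x := fun g =>
    ⟨fun h => hsep g ⟨x, h.symm ▸ hxT, hxT⟩, fun h => by rw [smul_flowTube hequiv, hinv g h]⟩
  have hstabT : {g : G | g • T = T} = {g : G | g • x = x} := Set.ext hT
  refine ⟨⟨hN.flowTube hcont δ, ⟨hstabT ▸ hfin, fun g hg => (hT g).2 (hsep g hg)⟩, by linarith,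
    ?_⟩, hstabT, Set.ext fun g => ⟨fun h => (hT g).1 (by rw [smul_flowTube hequiv, h]), hinv g⟩⟩
  rintro _ ⟨σ, hσ, y, hy, rfl⟩
  exact ⟨_, _, isBoxData_flowTube hzero hadd hδ htrans hσ hy⟩

end Flow

section LocalTimeFunction

variable {X : Type*} {Φ : ℝ → X → X}

def IsLocalTimeFunction [TopologicalSpace X] (Φ : ℝ → X → X) (s : X → ℝ) (W : Set X) (m : ℝ) :
    Prop :=
  (∀ q ∈ W, ContinuousAt s q) ∧ ∀ q ∈ W, ∀ w : ℝ, |w| ≤ m → s (Φ w q) = s q - w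

def flowRetraction (Φ : ℝ → X → X) (s : X → ℝ) (q : X) : X := Φ (s q) q

theorem flow_neg_flowRetraction (hzero : ∀ x : X, Φ 0 x = x)
    (hadd : ∀ s t : ℝ, ∀ x : X, Φ (s + t) x = Φ s (Φ t x)) (s : X → ℝ) (q : X) :
    Φ (-s q) (flowRetraction Φ s q) = q := by
  rw [flowRetraction, ← hadd, neg_add_cancel, hzero]

theorem flowRetraction_smul {H : Type*} [SMul H X]
    (hequiv : ∀ (h : H) (τ : ℝ) (x : X), Φ τ (h • x) = h • Φ τ x) {s : X → ℝ}
    (hs : ∀ (h : H) (q : X), s (h • q) = s q) (h : H) (q : X) :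
    flowRetraction Φ s (h • q) = h • flowRetraction Φ s q := by
  rw [flowRetraction, flowRetraction, hs, hequiv]

variable [TopologicalSpace X] {s : X → ℝ} {W : Set X} {m : ℝ}

theorem IsLocalTimeFunction.continuousAt_flowRetraction (hs : IsLocalTimeFunction Φ s W m)
    (hcont : Continuous fun p : ℝ × X => Φ p.1 p.2) {q : X} (hq : q ∈ W) :
    ContinuousAt (flowRetraction Φ s) q :=
  hcont.continuousAt.comp ((hs.1 q hq).prodMk continuousAt_id)

theorem IsLocalTimeFunction.apply_flowRetraction (hs : IsLocalTimeFunction Φ s W m) {q : X}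
    (hq : q ∈ W) (hsq : |s q| ≤ m) : s (flowRetraction Φ s q) = 0 := by
  rw [flowRetraction, hs.2 q hq _ hsq, sub_self]

theorem IsLocalTimeFunction.eq_zero_of_flow_eq (hs : IsLocalTimeFunction Φ s W m) {q : X}
    (hq : q ∈ W) {w : ℝ} (hw : |w| ≤ m) (h : s (Φ w q) = s q) : w = 0 := by
  linarith [hs.2 q hq w hw]

theorem IsLocalTimeFunction.subset_compl_flowFixed (hs : IsLocalTimeFunction Φ s W m)
    (hm : 0 < m) : W ⊆ (flowFixed Φ)ᶜ := fun q hq hfix =>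
  hm.ne' (hs.eq_zero_of_flow_eq hq (abs_of_pos hm).le (by rw [hfix m]))

theorem isClosed_flowFixed [T2Space X] (hcont : Continuous fun p : ℝ × X => Φ p.1 p.2) :
    IsClosed (flowFixed Φ) := by
  simp only [flowFixed, ofPred_forall]
  exact isClosed_iInter fun τ =>
    isClosed_eq (hcont.comp (continuous_const.prodMk continuous_id)) continuous_id

end LocalTimeFunction

theorem exists_invariant_isLocalTimeFunction {H X : Type*} [Group H] [Fintype H]
    [TopologicalSpace X] [T2Space X] [MulAction H X] [ContinuousConstSMul H X] {Φ : ℝ → X → X}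
    (hcont : Continuous fun p : ℝ × X => Φ p.1 p.2) (hzero : ∀ x : X, Φ 0 x = x)
    (hadd : ∀ s t : ℝ, ∀ x : X, Φ (s + t) x = Φ s (Φ t x))
    (hequiv : ∀ (h : H) (τ : ℝ) (x : X), Φ τ (h • x) = h • Φ τ x)
    {B : Set X} {l : ℝ} (hB : IsNonequivariantBox Φ B l) {x : X} (hx : x ∈ interior B)
    (hfix : ∀ h : H, h • x = x) :
    ∃ (s : X → ℝ) (W : Set X) (m : ℝ), 0 < m ∧ IsOpen W ∧ x ∈ W ∧
      (∀ (h : H) (q : X), s (h • q) = s q) ∧ s x = 0 ∧ IsLocalTimeFunction Φ s W m := by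
  obtain ⟨hBc, -, hdata⟩ := hB
  set a := entryTime Φ B l
  have hca : ∀ q ∈ interior B, ContinuousAt a q := fun q hq =>
    continuousAt_entryTime hcont hBc.isClosed hdata hq
  obtain ⟨hax, hlx⟩ :=
    (isBoxData_entryTime (hdata x (interior_subset hx))).neg_pos_of_mem_interior hcont hzero hx
  obtain ⟨m, hm, hmax, hmlx⟩ : ∃ m, 0 < m ∧ a x < -m ∧ m < a x + l :=
    ⟨min (-a x) (a x + l) / 2, half_pos (lt_min (by linarith) hlx),
      by linarith [min_le_left (-a x) (a x + l)], by linarith [min_le_right (-a x) (a x + l)]⟩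
  have hU : {q | q ∈ interior B ∧ a q < -m ∧ m < a q + l} ∈ 𝓝 x := by
    filter_upwards [isOpen_interior.mem_nhds hx,
      (hca x hx).eventually_lt continuousAt_const hmax,
      continuousAt_const.eventually_lt ((hca x hx).add continuousAt_const) hmlx] with q h₁ h₂ h₃
    exact ⟨h₁, h₂, h₃⟩
  obtain ⟨U, hUsub, hUo, hxU⟩ := mem_nhds_iff.1 hU
  refine ⟨fun q => orbitAverage H a q - a x, invariantCore H U, m, hm, hUo.invariantCore,
    fun h => by rw [hfix]; exact hxU, fun h q => ?_, ?_, fun q hq => ?_, fun q hq w hw => ?_⟩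
  · dsimp only
    rw [orbitAverage_smul]
  · dsimp only
    rw [orbitAverage_of_forall_smul_eq a hfix, sub_self]
  · refine (ContinuousAt.orbitAverage fun h => ?_).sub continuousAt_const
    exact (hca _ (hUsub (hq h)).1).comp (continuous_const_smul h).continuousAt
  · dsimp only
    rw [orbitAverage_eq_sub (w := w) fun h => ?_, sub_right_comm]
    obtain ⟨hin, h₁, h₂⟩ := hUsub (hq h)
    rw [abs_le] at hw
    rw [← hequiv]
    exact entryTime_flow hadd (hdata _ (interior_subset hin)) ⟨by linarith, by linarith⟩

theorem exists_invariant_isConnected_slice {H X : Type*} [Group H] [Finite H]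
    [TopologicalSpace X] [T3Space X] [MulAction H X] [ContinuousConstSMul H X]
    {Φ : ℝ → X → X} (hcont : Continuous fun p : ℝ × X => Φ p.1 p.2) (hzero : ∀ x : X, Φ 0 x = x)
    (hadd : ∀ s t : ℝ, ∀ x : X, Φ (s + t) x = Φ s (Φ t x))
    (hequiv : ∀ (h : H) (τ : ℝ) (x : X), Φ τ (h • x) = h • Φ τ x)
    [LocallyConnectedSpace ↥((flowFixed Φ)ᶜ)] {x : X} (hfix : ∀ h : H, h • x = x)
    {s : X → ℝ} {W : Set X} {m : ℝ} (hW : IsOpen W) (hxW : x ∈ W)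
    (hsinv : ∀ (h : H) (q : X), s (h • q) = s q) (hsx : s x = 0)
    (hs : IsLocalTimeFunction Φ s W m) {δ : ℝ} (hδ : 0 < δ) (hδm : δ ≤ m)
    {K V : Set X} (hK : IsCompact K) (hKx : K ∈ 𝓝 x) (hV : V ∈ 𝓝 x) :
    ∃ N : Set X, IsCompact N ∧ IsConnected N ∧ x ∈ N ∧ N ⊆ V ∩ W ∧ (∀ h : H, h • N = N) ∧
      (∀ y ∈ N, s y = 0) ∧ x ∈ interior (flowTube Φ δ N) := by
  have hrx : flowRetraction Φ s x = x := by rw [flowRetraction, hsx, hzero]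
  obtain ⟨C, hC, hCcl, hCsub⟩ := exists_mem_nhds_isClosed_subset
    (inter_mem (inter_mem hKx hV) (hW.mem_nhds hxW))
  have hE : {q | q ∈ W ∧ |s q| < δ ∧ flowRetraction Φ s q ∈ interior C} ∈ 𝓝 x := by
    have hrC : interior C ∈ 𝓝 (flowRetraction Φ s x) := by
      rw [hrx]
      exact interior_mem_nhds.2 hC
    filter_upwards [hW.mem_nhds hxW, hs.1 x hxW (Metric.ball_mem_nhds _ hδ),
      (hs.continuousAt_flowRetraction hcont hxW).preimage_mem_nhds hrC] with q h₁ h₂ h₃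
    rw [mem_preimage, Metric.mem_ball, Real.dist_eq, hsx, sub_zero] at h₂
    exact ⟨h₁, h₂, h₃⟩
  obtain ⟨D, hDo, hDconn, hxD, hDE, hDinv⟩ :=
    exists_isOpen_isConnected_invariant_subset (isClosed_flowFixed hcont).isOpen_compl hfix hE
      fun q hq => hs.subset_compl_flowFixed (hδ.trans_le hδm) hq.1
  set N := closure (flowRetraction Φ s '' D)
  have hNC : N ⊆ C :=
    closure_minimal (image_subset_iff.2 fun q hq => interior_subset (s := C) (hDE hq).2.2) hCcl
  have hNW : N ⊆ W := fun y hy => (hCsub (hNC hy)).2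
  have hs₀ : flowRetraction Φ s '' D ⊆ s ⁻¹' {0} := by
    rintro _ ⟨q, hq, rfl⟩
    exact hs.apply_flowRetraction (hDE hq).1 ((hDE hq).2.1.le.trans hδm)
  refine ⟨N, hK.of_isClosed_subset isClosed_closure (hNC.trans fun _ h => (hCsub h).1.1),
    (hDconn.image _ fun q hq =>
      (hs.continuousAt_flowRetraction hcont (hDE hq).1).continuousWithinAt).closure,
    subset_closure ⟨x, hxD, hrx⟩, fun y hy => ⟨(hCsub (hNC hy)).1.2, hNW hy⟩, fun h => ?_,
    fun y hy => ?_, interior_maximal (fun q hq => ?_) hDo hxD⟩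
  · rw [← closure_smul, ← image_smul, image_image]
    simp only [← flowRetraction_smul hequiv hsinv]
    rw [← image_image (flowRetraction Φ s), image_smul, hDinv]
  · exact closure_minimal (image_subset_iff.2 hs₀) isClosed_singleton
      ((hs.1 y (hNW hy)).continuousWithinAt.mem_closure_image hy)
  · have hsq := abs_lt.1 (hDE hq).2.1
    exact ⟨-s q, ⟨by linarith, by linarith⟩, flowRetraction Φ s q, subset_closure ⟨q, hq, rfl⟩,
      flow_neg_flowRetraction hzero hadd s q⟩

section ProperAction

variable {G X : Type*} [Group G] [TopologicalSpace X] [MulAction G X]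

theorem IsProperAction.finite_stabilizer (hproper : IsProperAction G X) (x : X) :
    {g : G | g • x = x}.Finite := by
  obtain ⟨U, -, hxU, hfin⟩ := hproper x
  refine hfin.subset fun g hg => ⟨x, ?_, hxU⟩
  rw [← show g • x = x from hg]
  exact smul_mem_smul_set hxU

theorem IsProperAction.exists_nhds_flow_separated [T2Space X] [ContinuousConstSMul G X]
    (hproper : IsProperAction G X) {Φ : ℝ → X → X}
    (hcont : Continuous fun p : ℝ × X => Φ p.1 p.2) (hzero : ∀ x : X, Φ 0 x = x) (x : X) :
    ∃ V ∈ 𝓝 x, ∃ c > 0, ∀ u : ℝ, |u| < c → ∀ q ∈ V, ∀ z ∈ V, ∀ g : G,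
      Φ u q = g • z → g • x = x := by
  obtain ⟨U, hU, hxU, hfin⟩ := hproper x
  have hflow : ContinuousAt (fun p : ℝ × X × X => Φ p.1 p.2.1) (0, x, x) :=
    (hcont.comp (continuous_fst.prodMk (continuous_fst.comp continuous_snd))).continuousAt
  have hin : ∀ᶠ p : ℝ × X × X in 𝓝 (0, x, x), Φ p.1 p.2.1 ∈ U ∧ p.2.2 ∈ U := by
    filter_upwards [hflow.preimage_mem_nhds (hU.mem_nhds (by simpa [hzero] using hxU)),
      (continuous_snd.comp continuous_snd).continuousAt.preimage_mem_nhds (hU.mem_nhds hxU)]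
      with p h₁ h₂ using ⟨h₁, h₂⟩
  -- Only the finitely many `g` with `g • U ∩ U ≠ ∅` need a separate argument.
  have hne : ∀ᶠ p : ℝ × X × X in 𝓝 (0, x, x), ∀ g ∈ {g : G | (g • U ∩ U).Nonempty},
      g • x ≠ x → Φ p.1 p.2.1 ≠ g • p.2.2 := by
    refine hfin.eventually_all.2 fun g _ => ?_
    by_cases hgx : g • x = x
    · exact Eventually.of_forall fun _ h => absurd hgx h
    · have hsmul : ContinuousAt (fun p : ℝ × X × X => g • p.2.2) (0, x, x) :=
        ((continuous_const_smul g).comp (continuous_snd.comp continuous_snd)).continuousAt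
      filter_upwards [(hflow.ne_iff_eventually_ne hsmul).1 (by simpa [hzero] using Ne.symm hgx)]
        with p hp _ using hp
  have key : ∀ᶠ p : ℝ × X × X in 𝓝 (0, x, x), ∀ g : G,
      Φ p.1 p.2.1 = g • p.2.2 → g • x = x := by
    filter_upwards [hin, hne] with p ⟨h₁, h₂⟩ h₃ g heq
    by_contra hgx
    exact h₃ g ⟨_, smul_mem_smul_set h₂, heq ▸ h₁⟩ hgx heq
  rw [nhds_prod_eq, nhds_prod_eq] at key
  obtain ⟨pu, hpu, pqz, hpqz, hkey⟩ := eventually_prod_iff.1 key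
  obtain ⟨V, hV, hVV⟩ := eventually_prod_self_iff (r := fun q z => pqz (q, z)) |>.1 hpqz
  obtain ⟨c, hc, hcu⟩ := Metric.eventually_nhds_iff.1 hpu
  exact ⟨V, hV, c, hc, fun u hu q hq z hz => hkey (hcu (by rwa [Real.dist_0_eq_abs]))
    (hVV q hq z hz)⟩

end ProperAction

theorem equivariant_box_from_nonequivariant_box_general
    (G X : Type*) [Group G] [TopologicalSpace X] [TopologicalSpace.MetrizableSpace X]
    [MulAction G X] [ContinuousConstSMul G X]
    (hproper : IsProperAction G X)
    (Φ : ℝ → X → X) (hflow : IsEquivariantFlow G Φ)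
    (hlc : LocallyConnectedSpace ↥((flowFixed Φ)ᶜ))
    (x : X)
    (hx : ∃ (B : Set X) (l : ℝ), IsNonequivariantBox Φ B l ∧ x ∈ interior B) :
    ∃ (B : Set X) (l : ℝ), IsBox G Φ B l ∧
      {g : G | g • B = B} = {g : G | g • x = x} ∧
      {g : G | g • boxSlice Φ B l = boxSlice Φ B l} = {g : G | g • x = x} ∧
      x ∈ boxSlice Φ B l ∩ interior B ∧
      IsConnected (boxSlice Φ B l) := by
  obtain ⟨hcont, hzero, hadd, hequiv⟩ := hflow
  obtain ⟨B', l', hB', hxB'⟩ := hx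
  let H := MulAction.stabilizer G x
  have hfin := hproper.finite_stabilizer x
  have : Finite H := hfin.to_subtype
  have := Fintype.ofFinite H
  have : ContinuousConstSMul H X := ⟨fun h => continuous_const_smul (h : G)⟩
  have hfix : ∀ h : H, h • x = x := fun h => h.2
  obtain ⟨s, W, m, hm, hW, hxW, hsinv, hsx, hs⟩ := exists_invariant_isLocalTimeFunction hcont hzero
    hadd (fun h : H => hequiv h) hB' hxB' hfix
  obtain ⟨V, hV, c, hc, hsep⟩ := hproper.exists_nhds_flow_separated hcont hzero x
  obtain ⟨δ, hδ, hδcm⟩ := exists_between (lt_min (half_pos hc) (div_pos hm three_pos))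
  obtain ⟨hδc, hδm⟩ := lt_min_iff.1 hδcm
  obtain ⟨N, hNc, hNconn, hxN, hNVW, hNinv, hsN, hxT⟩ := exists_invariant_isConnected_slice hcont
    hzero hadd (fun h : H => hequiv h) hfix hW hxW hsinv hsx hs hδ (by linarith) hB'.1
    (mem_interior_iff_mem_nhds.1 hxB') hV
  have htrans : ∀ y ∈ N, ∀ z ∈ N, ∀ w : ℝ, |w| < 3 * δ → Φ w y = z → w = 0 :=
    fun y hy z hz w hw hyz => hs.eq_zero_of_flow_eq (hNVW hy).2 (by linarith)
      (by rw [hyz, hsN y hy, hsN z hz])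
  obtain ⟨hbox, hstabB, hstabN⟩ := isBox_flowTube hcont hzero hadd hequiv hNc hδ htrans hxN
    (fun g hg => hNinv ⟨g, hg⟩)
    (fun g => smul_eq_of_smul_flowTube_inter_nonempty hzero hadd hequiv hsep
      (fun _ h => (hNVW h).1) (by linarith)) hfin
  refine ⟨flowTube Φ δ N, 2 * δ, hbox, hstabB, ?_⟩
  rw [boxSlice_flowTube hzero hadd hδ htrans]
  exact ⟨hstabN, ⟨hxN, hxT⟩, hNconn⟩

/-- Lemma 2.14: if `x` lies in the interior of some non-equivariant box, then there is an
(equivariant) box `B` with `G_B = G_{S_B} = G_x`, `x ∈ S_B ∩ B°` and connected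
central slice `S_B`. -/
theorem equivariant_box_from_nonequivariant_box
    (G X : Type*) [Group G] [TopologicalSpace X] [TopologicalSpace.MetrizableSpace X]
    [MulAction G X] [ContinuousConstSMul G X]
    (hproper : IsProperAction G X) (hcocompact : IsCocompactAction G X)
    (Φ : ℝ → X → X) (hflow : IsEquivariantFlow G Φ)
    (hlc : LocallyConnectedSpace ↥((flowFixed Φ)ᶜ))
    (x : X)
    (hx : ∃ (B : Set X) (l : ℝ), IsNonequivariantBox Φ B l ∧ x ∈ interior B) :
    ∃ (B : Set X) (l : ℝ), IsBox G Φ B l ∧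
      {g : G | g • B = B} = {g : G | g • x = x} ∧
      {g : G | g • boxSlice Φ B l = boxSlice Φ B l} = {g : G | g • x = x} ∧
      x ∈ boxSlice Φ B l ∩ interior B ∧
      IsConnected (boxSlice Φ B l) :=
  equivariant_box_from_nonequivariant_box_general G X hproper Φ hflow hlc x hx
end

section
/- Let Z be a compact metrizable space of covering dimension n with an action of a finite group F by homeomorphisms. Let U be a finite collection of open Fin-subsets of Z such that gU ∈ U for all g ∈ F, U ∈ U. Suppose for each U ∈ U an open subset U'' ⊆ U is given with closure(U'') ⊆ U. Put m = (n+1)·|F|. Then for each U ∈ U one can find an open subset U' ⊆ Z such that: (1) U'' ⊆ closure(U'') ⊆ U' ⊆ closure(U') ⊆ U; (2) whenever U₀ ⊆ U has more than m elements, the intersection of the boundaries ∂U' over U ∈ U₀ is empty; (3) (gU)' = g(U') for all g ∈ F, U ∈ U. -/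
/-!
First ignore the group. Refine the cover of `Z` by the sets `⋂ {U | x ∈ U} ∩ ⋂ {(C U)ᶜ | x ∉ C U}`
to a finite open cover `𝒲` of order `n + 1`; every `W ∈ 𝒲` meeting `C U` then lies in `U`. For a
partition of unity `ρ` subordinate to `𝒲`, the function `f_U = ∑_{W ∩ C U ≠ ∅} ρ_W` is `1` on
`C U` and `0` off `U`, so `O U = {f_U > t_U}` lies between them for every level `t_U ∈ (0, 1)`.
At a point `z` the values `f_U z` are linear in the at most `n + 1` nonzero numbers `ρ_W z`, so
levels chosen off finitely many proper linear subspaces of `ℝ^𝒰` (a null set) put `z` on at most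
`n + 1` of the level sets `{f_U = t_U} ⊇ ∂(O U)`.

Equivariance is forced afterwards by passing to `⋂ g, g • O (g⁻¹ • U)`: if `x` is on the boundary
of this set, some `g • x` is on the boundary of `O (g • U)`, so `x` lies on at most `(n + 1)·|F|`
of these boundaries. Taking `C U = ⋃ g, g • closure (U'' (g⁻¹ • U))` keeps `closure U''` inside.
-/

open Pointwise

def dimLE {X : Type*} (U : Set (Set X)) (N : ℕ) : Prop :=
  ∀ x : X, {V | V ∈ U ∧ x ∈ V}.Finite ∧ {V | V ∈ U ∧ x ∈ V}.ncard ≤ N + 1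

def coveringDimLE (X : Type*) [TopologicalSpace X] (n : ℕ) : Prop :=
  ∀ U : Set (Set X), (∀ V ∈ U, IsOpen V) → ⋃₀ U = Set.univ →
    ∃ W : Set (Set X), (∀ V ∈ W, IsOpen V) ∧ ⋃₀ W = Set.univ ∧
      (∀ V ∈ W, ∃ V' ∈ U, V ⊆ V') ∧ dimLE W n

open Set MeasureTheory

theorem exists_mem_pi_Ioo_forall_notMem_of_ne_top {κ σ : Type*} [Fintype κ] [Finite σ]
    (S : σ → Submodule ℝ (κ → ℝ)) (hS : ∀ j, S j ≠ ⊤) :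
    ∃ t : κ → ℝ, (∀ k, t k ∈ Ioo (0 : ℝ) 1) ∧ ∀ j, t ∉ S j := by
  have hnull : volume (⋃ j, (S j : Set (κ → ℝ))) = 0 :=
    measure_iUnion_null fun j => Measure.addHaar_submodule volume (S j) (hS j)
  have hbox : volume (univ.pi fun _ : κ => Ioo (0 : ℝ) 1) ≠ 0 := by
    simp [volume_pi_pi, Real.volume_Ioo]
  obtain ⟨t, htbox, htS⟩ := nonempty_of_measure_ne_zero (μ := volume)
    (by rwa [measure_sdiff_null hnull])
  exact ⟨t, fun k => htbox k (mem_univ k), fun j h => htS (mem_iUnion.2 ⟨j, h⟩)⟩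

theorem comap_funLeft_range_mulVecLin_ne_top {κ ι : Type*} [Fintype κ] [Fintype ι]
    {I : Finset κ} (M : Matrix I ι ℝ) (hcard : Fintype.card ι < I.card) :
    (LinearMap.range M.mulVecLin).comap (LinearMap.funLeft ℝ ℝ (Subtype.val : I → κ)) ≠ ⊤ := by
  intro h
  have hπ : Function.Surjective (LinearMap.funLeft ℝ ℝ (Subtype.val : I → κ)) :=
    LinearMap.funLeft_surjective_of_injective _ _ _ Subtype.val_injective
  have hrange : LinearMap.range M.mulVecLin = ⊤ := by
    rw [← Submodule.map_comap_eq_of_surjective hπ (LinearMap.range _), h, Submodule.map_top,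
      LinearMap.range_eq_top.2 hπ]
  have := LinearMap.finrank_range_le M.mulVecLin
  rw [hrange, finrank_top, Module.finrank_fintype_fun_eq_card, Module.finrank_fintype_fun_eq_card,
    Fintype.card_coe] at this
  omega

theorem exists_generic_levels {κ ι : Type*} [Fintype κ] [Fintype ι] (a : κ → ι → ℝ) :
    ∃ t : κ → ℝ, (∀ k, t k ∈ Ioo (0 : ℝ) 1) ∧
      ∀ y : ι → ℝ, {k | ∑ i, a k i * y i = t k}.ncard ≤ (Function.support y).ncard := by
  classical
  let S : {p : Finset κ × Finset ι // p.2.card < p.1.card} → Submodule ℝ (κ → ℝ) := fun p =>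
    (LinearMap.range (Matrix.of fun (k : p.1.1) (i : p.1.2) => a k i).mulVecLin).comap
      (LinearMap.funLeft ℝ ℝ (Subtype.val : p.1.1 → κ))
  obtain ⟨t, ht01, htS⟩ := exists_mem_pi_Ioo_forall_notMem_of_ne_top S fun p =>
    comap_funLeft_range_mulVecLin_ne_top _ (by simpa using p.2)
  refine ⟨t, ht01, fun y => ?_⟩
  by_contra! hlt
  set I := {k | ∑ i, a k i * y i = t k}.toFinset
  set P := (Function.support y).toFinset
  refine htS ⟨(I, P), by simpa only [ncard_eq_toFinset_card'] using hlt⟩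
    ⟨fun i => y i, funext fun k => ?_⟩
  have hk : ∑ i, a k i * y i = t k := by simpa [I] using k.2
  rw [LinearMap.funLeft_apply, ← hk,
    ← Finset.sum_subset (Finset.subset_univ P) fun i _ hi => by simp_all [P]]
  exact Finset.sum_coe_sort P fun i => a k i * y i

theorem dimLE.mono {X : Type*} {𝒱 𝒲 : Set (Set X)} {N : ℕ} (h : dimLE 𝒱 N) (h𝒲 : 𝒲 ⊆ 𝒱) :
    dimLE 𝒲 N := fun x =>
  have hsub : {V | V ∈ 𝒲 ∧ x ∈ V} ⊆ {V | V ∈ 𝒱 ∧ x ∈ V} := fun _ hV => ⟨h𝒲 hV.1, hV.2⟩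
  ⟨(h x).1.subset hsub, (ncard_le_ncard hsub (h x).1).trans (h x).2⟩

namespace coveringDimLE

variable {X : Type*} [TopologicalSpace X] [CompactSpace X] {n : ℕ}

theorem exists_finite_refinement (hdim : coveringDimLE X n) (G : X → Set X)
    (hG : ∀ x, IsOpen (G x)) (hxG : ∀ x, x ∈ G x) :
    ∃ 𝒲 : Set (Set X), 𝒲.Finite ∧ (∀ W ∈ 𝒲, IsOpen W) ∧ ⋃₀ 𝒲 = univ ∧
      (∀ W ∈ 𝒲, ∃ x, W ⊆ G x) ∧ dimLE 𝒲 n := by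
  obtain ⟨𝒱, hopen, hcover, hrefine, hdim𝒱⟩ := hdim (range G) (forall_mem_range.2 hG)
    (eq_univ_of_forall fun x => mem_sUnion.2 ⟨G x, mem_range_self x, hxG x⟩)
  obtain ⟨𝒲, h𝒲𝒱, hfin, hcover𝒲⟩ := isCompact_univ.elim_finite_subcover_image (c := id) hopen
    (by simpa [sUnion_eq_biUnion] using hcover.ge)
  refine ⟨𝒲, hfin, fun W hW => hopen W (h𝒲𝒱 hW), ?_, fun W hW => ?_, hdim𝒱.mono h𝒲𝒱⟩
  · simpa [sUnion_eq_biUnion] using hcover𝒲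
  · obtain ⟨_, ⟨x, rfl⟩, hWx⟩ := hrefine W (h𝒲𝒱 hW)
    exact ⟨x, hWx⟩

theorem exists_finite_adapted_cover {κ : Type*} [Finite κ] (hdim : coveringDimLE X n)
    {U C : κ → Set X} (hU : ∀ k, IsOpen (U k)) (hC : ∀ k, IsClosed (C k)) (hCU : ∀ k, C k ⊆ U k) :
    ∃ 𝒲 : Set (Set X), 𝒲.Finite ∧ (∀ W ∈ 𝒲, IsOpen W) ∧ ⋃₀ 𝒲 = univ ∧ dimLE 𝒲 n ∧
      ∀ W ∈ 𝒲, ∀ k, (W ∩ C k).Nonempty → W ⊆ U k := by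
  let G : X → Set X := fun x => (⋂ k ∈ {k | x ∈ U k}, U k) ∩ ⋂ k ∈ {k | x ∉ C k}, (C k)ᶜ
  obtain ⟨𝒲, hfin, hopen, hcover, hG, hdim𝒲⟩ := hdim.exists_finite_refinement G
    (fun x => ((toFinite _).isOpen_biInter fun k _ => hU k).inter
      ((toFinite _).isOpen_biInter fun k _ => (hC k).isOpen_compl))
    (fun x => ⟨mem_iInter₂.2 fun _ hk => hk, mem_iInter₂.2 fun _ hk => hk⟩)
  refine ⟨𝒲, hfin, hopen, hcover, hdim𝒲, fun W hW k ⟨y, hyW, hyC⟩ => ?_⟩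
  obtain ⟨x, hWx⟩ := hG W hW
  have hxC : x ∈ C k := by
    by_contra hx
    exact mem_iInter₂.1 (hWx hyW).2 k hx hyC
  exact hWx.trans (inter_subset_left.trans (biInter_subset_of_mem (hCU k hxC)))

end coveringDimLE

namespace PartitionOfUnity

variable {ι X : Type*} [TopologicalSpace X] {ρ : PartitionOfUnity ι X univ}
  {W : ι → Set X}

theorem mem_of_ne_zero (hρ : ρ.IsSubordinate W) {i : ι} {x : X} (h : ρ i x ≠ 0) : x ∈ W i :=
  hρ i (subset_tsupport _ h)

open scoped Classical in
theorem sum_meeting_eq_one [Fintype ι] (hρ : ρ.IsSubordinate W) {C : Set X} {x : X}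
    (hx : x ∈ C) :
    ∑ i, (if (W i ∩ C).Nonempty then 1 else 0) * ρ i x = 1 := by
  refine (Finset.sum_congr rfl fun i _ => ?_).trans
    ((finsum_eq_sum_of_fintype _).symm.trans (ρ.sum_eq_one (mem_univ x)))
  by_cases h : ρ i x = 0
  · simp [h]
  · simp [show (W i ∩ C).Nonempty from ⟨x, mem_of_ne_zero hρ h, hx⟩]

open scoped Classical in
theorem sum_meeting_eq_zero [Fintype ι] (hρ : ρ.IsSubordinate W) {C V : Set X}
    (hCV : ∀ i, (W i ∩ C).Nonempty → W i ⊆ V) {x : X} (hx : x ∉ V) :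
    ∑ i, (if (W i ∩ C).Nonempty then 1 else 0) * ρ i x = 0 := by
  refine Finset.sum_eq_zero fun i _ => ?_
  by_cases h : (W i ∩ C).Nonempty
  · rw [if_pos h, one_mul]
    by_contra h'
    exact hx (hCV i h (mem_of_ne_zero hρ h'))
  · rw [if_neg h, zero_mul]

end PartitionOfUnity

theorem exists_open_between_frontier_ncard_le {Z κ : Type*} [TopologicalSpace Z] [CompactSpace Z]
    [NormalSpace Z] [Finite κ] {n : ℕ} (hdim : coveringDimLE Z n) {U C : κ → Set Z}
    (hU : ∀ k, IsOpen (U k)) (hC : ∀ k, IsClosed (C k)) (hCU : ∀ k, C k ⊆ U k) :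
    ∃ O : κ → Set Z, (∀ k, IsOpen (O k) ∧ C k ⊆ O k ∧ closure (O k) ⊆ U k) ∧
      ∀ z, {k | z ∈ frontier (O k)}.ncard ≤ n + 1 := by
  classical
  obtain ⟨𝒲, hfin, hopen, hcover, hdim𝒲, hadapted⟩ := hdim.exists_finite_adapted_cover hU hC hCU
  have := hfin.fintype
  have := Fintype.ofFinite κ
  obtain ⟨ρ, hρ⟩ := PartitionOfUnity.exists_isSubordinate isClosed_univ
    (fun W : 𝒲 => (W : Set Z)) (fun W => hopen W W.2) (by rw [← sUnion_eq_iUnion, hcover])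
  let a : κ → 𝒲 → ℝ := fun k W => if ((W : Set Z) ∩ C k).Nonempty then 1 else 0
  let f : κ → Z → ℝ := fun k x => ∑ W, a k W * ρ W x
  have hf : ∀ k, Continuous (f k) := fun k =>
    continuous_finsetSum _ fun W _ => continuous_const.mul (ρ W).continuous
  obtain ⟨t, ht01, hlevels⟩ := exists_generic_levels a
  refine ⟨fun k => {x | t k < f k x}, fun k => ⟨isOpen_lt continuous_const (hf k), ?_, ?_⟩,
    fun z => ?_⟩
  · intro x hx
    have hfx : f k x = 1 := ρ.sum_meeting_eq_one hρ hx
    exact (ht01 k).2.trans_eq hfx.symm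
  · refine (closure_lt_subset_le continuous_const (hf k)).trans fun x hx => ?_
    by_contra hxU
    have hfx : f k x = 0 := ρ.sum_meeting_eq_zero hρ (fun W => hadapted W W.2 k) hxU
    exact (ht01 k).1.not_ge (hfx ▸ hx)
  have hsupport : Function.support (fun W : 𝒲 => ρ W z) ⊆ {W | z ∈ (W : Set Z)} :=
    fun W hW => ρ.mem_of_ne_zero hρ hW
  calc {k | z ∈ frontier {x | t k < f k x}}.ncard
      ≤ {k | ∑ W, a k W * ρ W z = t k}.ncard :=
        ncard_le_ncard fun k hk => (frontier_lt_subset_eq continuous_const (hf k) hk).symm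
    _ ≤ (Function.support fun W : 𝒲 => ρ W z).ncard := hlevels _
    _ ≤ {W : 𝒲 | z ∈ (W : Set Z)}.ncard := ncard_le_ncard hsupport
    _ ≤ n + 1 := by
        rw [← ncard_image_of_injective _ Subtype.val_injective]
        convert (hdim𝒲 z).2 using 2
        ext V
        simp [and_comm]

theorem Set.Finite.exists_open_between_frontier_ncard_le {Z : Type*} [TopologicalSpace Z]
    [CompactSpace Z] [NormalSpace Z] {n : ℕ} (hdim : coveringDimLE Z n) {𝒰 : Set (Set Z)}
    (h𝒰 : 𝒰.Finite) (hopen : ∀ U ∈ 𝒰, IsOpen U) {C : Set Z → Set Z}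
    (hC : ∀ U ∈ 𝒰, IsClosed (C U) ∧ C U ⊆ U) :
    ∃ O : Set Z → Set Z, (∀ U ∈ 𝒰, IsOpen (O U) ∧ C U ⊆ O U ∧ closure (O U) ⊆ U) ∧
      ∀ z, {U ∈ 𝒰 | z ∈ frontier (O U)}.ncard ≤ n + 1 := by
  have := h𝒰.to_subtype
  obtain ⟨O, hO, hfrontier⟩ := _root_.exists_open_between_frontier_ncard_le hdim
    (U := Subtype.val) (C := fun U : 𝒰 => C U) (fun U => hopen U U.2) (fun U => (hC U U.2).1)
    (fun U => (hC U U.2).2)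
  let O' : Set Z → Set Z := Function.extend Subtype.val O fun _ => ∅
  have hext : ∀ U : 𝒰, O' U = O U := Subtype.val_injective.extend_apply O _
  refine ⟨O', fun U hU => hext ⟨U, hU⟩ ▸ hO ⟨U, hU⟩, fun z => ?_⟩
  have himage : {U ∈ 𝒰 | z ∈ frontier (O' U)} = Subtype.val '' {U : 𝒰 | z ∈ frontier (O U)} := by
    ext U
    constructor
    · rintro ⟨hU, hz⟩
      exact ⟨⟨U, hU⟩, show z ∈ frontier (O ⟨U, hU⟩) from hext ⟨U, hU⟩ ▸ hz, rfl⟩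
    · rintro ⟨U, hz, rfl⟩
      exact ⟨U.2, (hext U).symm ▸ hz⟩
  rw [himage, ncard_image_of_injective _ Subtype.val_injective]
  exact hfrontier z

section EquivariantCore

variable {F Z : Type*} [Group F] [MulAction F Z]

variable (F) in
def equivariantCore (O : Set Z → Set Z) (U : Set Z) : Set Z :=
  ⋂ g : F, g • O (g⁻¹ • U)

theorem equivariantCore_smul (O : Set Z → Set Z) (h : F) (U : Set Z) :
    equivariantCore F O (h • U) = h • equivariantCore F O U := by
  rw [equivariantCore, equivariantCore, smul_set_iInter,
    ← (Equiv.mulLeft h).surjective.iInter_comp]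
  simp [mul_smul]

theorem equivariantCore_subset (O : Set Z → Set Z) (U : Set Z) :
    equivariantCore F O U ⊆ O U :=
  iInter_subset_of_subset 1 (by simp)

theorem subset_equivariantCore {O : Set Z → Set Z} {S U : Set Z}
    (h : ∀ g : F, g • S ⊆ O (g • U)) : S ⊆ equivariantCore F O U :=
  subset_iInter fun g _ hx => mem_smul_set_iff_inv_smul_mem.2 (h g⁻¹ (smul_mem_smul_set hx))

variable [TopologicalSpace Z] [ContinuousConstSMul F Z] [Finite F]

theorem isOpen_equivariantCore {O : Set Z → Set Z} {U : Set Z}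
    (hO : ∀ g : F, IsOpen (O (g • U))) : IsOpen (equivariantCore F O U) :=
  isOpen_iInter_of_finite fun g => (hO g⁻¹).smul g

theorem exists_smul_mem_frontier_of_mem_frontier_equivariantCore {O : Set Z → Set Z} {U : Set Z}
    (hO : ∀ g : F, IsOpen (O (g • U))) {x : Z} (hx : x ∈ frontier (equivariantCore F O U)) :
    ∃ g : F, g • x ∈ frontier (O (g • U)) := by
  rw [(isOpen_equivariantCore hO).frontier_eq] at hx
  obtain ⟨g, hg⟩ : ∃ g : F, x ∉ g • O (g⁻¹ • U) := by simpa [equivariantCore] using hx.2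
  have hcl : x ∈ g • closure (O (g⁻¹ • U)) :=
    closure_smul g (O (g⁻¹ • U)) ▸ closure_mono (iInter_subset _ g) hx.1
  refine ⟨g⁻¹, ?_⟩
  rw [(hO g⁻¹).frontier_eq]
  exact ⟨mem_smul_set_iff_inv_smul_mem.1 hcl, fun h => hg (mem_smul_set_iff_inv_smul_mem.2 h)⟩

theorem ncard_frontier_equivariantCore_le {𝒰 : Set (Set Z)} (h𝒰 : 𝒰.Finite)
    (hinv : ∀ g : F, ∀ U ∈ 𝒰, g • U ∈ 𝒰) {O : Set Z → Set Z} (hO : ∀ U ∈ 𝒰, IsOpen (O U))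
    {N : ℕ} (hN : ∀ z, {V ∈ 𝒰 | z ∈ frontier (O V)}.ncard ≤ N) (x : Z) :
    {U ∈ 𝒰 | x ∈ frontier (equivariantCore F O U)}.ncard ≤ N * Nat.card F := by
  have := Fintype.ofFinite F
  let B : F → Set (Set Z) := fun g => g⁻¹ • {V ∈ 𝒰 | g • x ∈ frontier (O V)}
  have hsub : {U ∈ 𝒰 | x ∈ frontier (equivariantCore F O U)} ⊆ ⋃ g ∈ Finset.univ, B g := by
    rintro U ⟨hU, hx⟩
    obtain ⟨g, hg⟩ :=
      exists_smul_mem_frontier_of_mem_frontier_equivariantCore (fun g => hO _ (hinv g U hU)) hx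
    exact mem_biUnion (Finset.mem_univ g) ⟨g • U, ⟨hinv g U hU, hg⟩, inv_smul_smul g U⟩
  have hfin : (⋃ g ∈ Finset.univ, B g).Finite :=
    Finite.biUnion (Finset.finite_toSet _) fun g _ => (h𝒰.subset (sep_subset _ _)).smul_set
  calc _ ≤ (⋃ g ∈ Finset.univ, B g).ncard := ncard_le_ncard hsub hfin
    _ ≤ ∑ g, (B g).ncard := Finset.set_ncard_biUnion_le _ _
    _ ≤ ∑ _g : F, N := Finset.sum_le_sum fun g _ => (ncard_smul_set _ _).trans_le (hN _)
    _ = N * Nat.card F := by simp [mul_comm]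

end EquivariantCore

theorem general_position_for_subsets_general
    (Z : Type*) [TopologicalSpace Z] [CompactSpace Z] [TopologicalSpace.MetrizableSpace Z]
    (n : ℕ) (hdim : coveringDimLE Z n)
    (F : Type*) [Group F] [Finite F] [MulAction F Z] [ContinuousConstSMul F Z]
    (𝒰 : Set (Set Z)) (hUfin : 𝒰.Finite)
    (hUopen : ∀ U ∈ 𝒰, IsOpen U)
    (hUinv : ∀ (g : F), ∀ U ∈ 𝒰, g • U ∈ 𝒰)
    (Udd : Set Z → Set Z)
    (hUdd : ∀ U ∈ 𝒰, IsOpen (Udd U) ∧ Udd U ⊆ U ∧ closure (Udd U) ⊆ U) :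
    ∃ Up : Set Z → Set Z,
      (∀ U ∈ 𝒰, IsOpen (Up U) ∧
        Udd U ⊆ closure (Udd U) ∧ closure (Udd U) ⊆ Up U ∧
        Up U ⊆ closure (Up U) ∧ closure (Up U) ⊆ U) ∧
      (∀ 𝒰₀ ⊆ 𝒰, (n + 1) * Nat.card F < 𝒰₀.ncard →
        (⋂ U ∈ 𝒰₀, frontier (Up U)) = ∅) ∧
      (∀ (g : F), ∀ U ∈ 𝒰, Up (g • U) = g • Up U) := by
  let C : Set Z → Set Z := fun U => ⋃ g : F, g • closure (Udd (g⁻¹ • U))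
  have hC : ∀ U ∈ 𝒰, IsClosed (C U) ∧ C U ⊆ U := fun U hU =>
    ⟨isClosed_iUnion_of_finite fun g => isClosed_closure.smul g, iUnion_subset fun g =>
      (smul_set_mono (hUdd _ (hUinv g⁻¹ U hU)).2.2).trans (smul_inv_smul g U).subset⟩
  obtain ⟨O, hO, hfrontier⟩ := hUfin.exists_open_between_frontier_ncard_le hdim hUopen hC
  have hOopen : ∀ g : F, ∀ U ∈ 𝒰, IsOpen (O (g • U)) := fun g U hU => (hO _ (hUinv g U hU)).1
  refine ⟨equivariantCore F O, fun U hU => ⟨isOpen_equivariantCore (hOopen · U hU),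
    subset_closure, ?_, subset_closure, ?_⟩, fun 𝒰₀ h₀ hcard => ?_,
    fun g U _ => equivariantCore_smul O g U⟩
  · refine subset_equivariantCore fun g => ?_
    refine (subset_iUnion_of_subset g ?_).trans (hO _ (hUinv g U hU)).2.1
    rw [inv_smul_smul]
  · exact (closure_mono (equivariantCore_subset O U)).trans (hO U hU).2.2
  refine eq_empty_iff_forall_notMem.2 fun x hx => ?_
  have hsub : 𝒰₀ ⊆ {U ∈ 𝒰 | x ∈ frontier (equivariantCore F O U)} :=
    fun U hU => ⟨h₀ hU, mem_iInter₂.1 hx U hU⟩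
  have hle := ncard_frontier_equivariantCore_le hUfin hUinv (fun U hU => (hO U hU).1) hfrontier x
  exact (hcard.trans_le ((ncard_le_ncard hsub (hUfin.subset (sep_subset _ _))).trans hle)).false

/-- Proposition 3.2 (general position in metric spaces): given a finite `F`-invariant
collection `𝒰` of open `Fin`-subsets of a compact metrizable `Z` of covering dimension
`n` and inner approximations `U''`, one finds equivariant intermediate open sets `U'`
whose boundaries are in general position: any more than `m = (n+1)·|F|` of the
boundaries `∂U'` have empty intersection. -/
theorem general_position_for_subsets
    (Z : Type*) [TopologicalSpace Z] [CompactSpace Z] [TopologicalSpace.MetrizableSpace Z]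
    (n : ℕ) (hdim : coveringDimLE Z n)
    (F : Type*) [Group F] [Finite F] [MulAction F Z] [ContinuousConstSMul F Z]
    (𝒰 : Set (Set Z)) (hUfin : 𝒰.Finite)
    (hUopen : ∀ U ∈ 𝒰, IsOpen U)
    (hUFin : ∀ U ∈ 𝒰, IsFinSubset F U)
    (hUinv : ∀ (g : F), ∀ U ∈ 𝒰, g • U ∈ 𝒰)
    (Udd : Set Z → Set Z)
    (hUdd : ∀ U ∈ 𝒰, IsOpen (Udd U) ∧ Udd U ⊆ U ∧ closure (Udd U) ⊆ U) :
    ∃ Up : Set Z → Set Z,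
      (∀ U ∈ 𝒰, IsOpen (Up U) ∧
        Udd U ⊆ closure (Udd U) ∧ closure (Udd U) ⊆ Up U ∧
        Up U ⊆ closure (Up U) ∧ closure (Up U) ⊆ U) ∧
      (∀ 𝒰₀ ⊆ 𝒰, (n + 1) * Nat.card F < 𝒰₀.ncard →
        (⋂ U ∈ 𝒰₀, frontier (Up U)) = ∅) ∧
      (∀ (g : F), ∀ U ∈ 𝒰, Up (g • U) = g • Up U) :=
  general_position_for_subsets_general Z n hdim F 𝒰 hUfin hUopen hUinv Udd hUdd
end

section
/- Let Z be a compact metric space of covering dimension n with an action of a finite group F by isometries. Let Y ⊆ Z be an open locally connected F-invariant subset. Let U be a finite collection of open subsets of Z such that gU ∈ U for all g ∈ F, U ∈ U, and closure(U) ⊆ Y for all U ∈ U. Assume there is k such that for every subset U₀ ⊆ U with more than k elements the intersection of the boundaries ∂U over U ∈ U₀ is empty. Let δ > 0, and put m = (n+1)·|F| and l = k·|F|. Then there are finite collections V^0, …, V^m of open subsets of Z such that: (1) V := V^0 ∪ … ∪ V^m is an open cover of Z; (2) diam(V) < δ for every V ∈ V; (3) for every V ∈ V there are at most l sets U ∈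 U such that U and V intersect but U does not contain V; (4) for fixed j and V₀ ∈ V^j, V₀ ∩ V ≠ ∅ for at most 2^{j+1} − 2 sets V ∈ V^0 ∪ … ∪ V^j; (5) for fixed j and V₀, V₁ ∈ V^j, either V₀ = V₁ or closure(V₀) ∩ closure(V₁) = ∅; (6) each V^i is F-invariant: gV ∈ V^i for g ∈ F, V ∈ V^i; (7) V = interior(closure(V)) for every V ∈ V. -/
/-!
Saturating a fine open cover of order `n + 1` under `F` gives an `F`-invariant cover `𝒲` of
order at most `m = (n + 1)|F|`. With `f_W(x) = dist(x, Wᶜ)`, a nonempty `S ⊆ 𝒲` singles out the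
open set of points where `f_W > c` for `W ∈ S` and `f_W > 2 f_{W'}` for `W ∈ S`, `W' ∉ S`; the
family `𝒱^j` consists of the regularizations `int(cl(·))` of these sets for `|S| = j`.
Because of the factor `2`, a point in the closures of the sets of `S` and of `S'` with
`|S'| ≤ |S|` forces `S' ⊆ S`: this gives the disjointness within `𝒱^j` and the bound on the sets
meeting a member of `𝒱^j`. A point `x` is covered because the sets
`{W | f_W(x) > c₀ 2^{-(j+1)}}`, `j = 0, …, m`, form an increasing chain of at most `m` elements,
so two consecutive ones agree. Finally, near any `x₀` membership in each `U ∈ 𝒰` with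
`x₀ ∉ ∂U` is constant, so a set of small diameter can straddle only the at most `k` sets `U`
with `x₀ ∈ ∂U`.
-/

open Pointwise

open Set Metric Topology

theorem Finset.exists_eq_succ_of_monotone {α : Type*} {A : ℕ → Finset α} (hA : Monotone A)
    {m : ℕ} (hm : (A m).card < m + (A 0).card) : ∃ j < m, A j = A (j + 1) := by
  by_contra! hne
  have hgrow : ∀ j ≤ m, j + (A 0).card ≤ (A j).card := by
    intro j
    induction j with
    | zero => simp
    | succ j ih =>
      intro hj
      have := Finset.card_lt_card ((hA (Nat.le_add_right j 1)).lt_of_ne (hne j hj))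
      have := ih (by omega)
      omega
  have := hgrow m le_rfl
  omega

section Dominance

variable {ι X : Type*} (f : ι → X → ℝ) (s : Finset ι) (c : ℝ)

def dominantSet (S : Finset ι) : Set X :=
  {x | ∀ i ∈ S, c < f i x ∧ ∀ j ∈ s, j ∉ S → 2 * f j x < f i x}

def dominantLevel [TopologicalSpace X] (j : ℕ) : Set (Set X) :=
  {V | ∃ S ⊆ s, S.Nonempty ∧ S.card = j ∧ V = interior (closure (dominantSet f s c S))}

variable {f s c}

theorem exists_mem_dominantSet {m : ℕ} {c₀ : ℝ} (hc₀ : 0 < c₀) {x : X}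
    (hcard : {i | i ∈ s ∧ 0 < f i x}.ncard ≤ m) (hlow : ∃ i ∈ s, c₀ ≤ f i x) :
    ∃ S ⊆ s, S.Nonempty ∧ S.card ≤ m ∧ x ∈ dominantSet f s (c₀ / 2 ^ (m + 1)) S := by
  have hanti : ∀ {j j' : ℕ}, j ≤ j' → c₀ / 2 ^ (j' + 1) ≤ c₀ / 2 ^ (j + 1) := fun h =>
    div_le_div_of_nonneg_left hc₀.le (by positivity) (pow_le_pow_right₀ one_le_two (by omega))
  set A : ℕ → Finset ι := fun j => s.filter fun i => c₀ / 2 ^ (j + 1) < f i x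
  have hA : Monotone A := fun j j' h =>
    Finset.monotone_filter_right s fun _ _ hi => (hanti h).trans_lt hi
  have hA₀ : (A 0).Nonempty := by
    obtain ⟨i, hi, hci⟩ := hlow
    exact ⟨i, Finset.mem_filter.2 ⟨hi, by linarith [half_lt_self hc₀, pow_one (2 : ℝ)]⟩⟩
  have hAm : (A m).card ≤ m := by
    refine le_trans ?_ hcard
    rw [← Set.ncard_coe_finset]
    refine Set.ncard_le_ncard (fun i hi => ?_) (s.finite_toSet.subset fun i hi => hi.1)
    obtain ⟨his, hci⟩ := Finset.mem_filter.1 hi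
    exact ⟨his, lt_trans (by positivity) hci⟩
  obtain ⟨j, hjm, hj⟩ :=
    Finset.exists_eq_succ_of_monotone (m := m) hA (by have := hA₀.card_pos; omega)
  refine ⟨A j, Finset.filter_subset _ _, hA₀.mono (hA j.zero_le),
    (Finset.card_le_card (hA hjm.le)).trans hAm, fun i hi => ⟨?_, fun i' hi' hi'A => ?_⟩⟩
  · exact (hanti hjm.le).trans_lt (Finset.mem_filter.1 hi).2
  · have hi'x : f i' x ≤ c₀ / 2 ^ (j + 1 + 1) := by
      rw [hj] at hi'A
      exact not_lt.1 fun h => hi'A (Finset.mem_filter.2 ⟨hi', h⟩)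
    calc 2 * f i' x ≤ 2 * (c₀ / 2 ^ (j + 1 + 1)) := by gcongr
      _ = c₀ / 2 ^ (j + 1) := by rw [pow_succ]; field_simp
      _ < f i x := (Finset.mem_filter.1 hi).2

theorem smul_dominantSet {G : Type*} [Group G] [MulAction G ι] [MulAction G X] [DecidableEq ι]
    (hf : ∀ (g : G) i x, f (g • i) (g • x) = f i x) (hs : ∀ g : G, ∀ i ∈ s, g • i ∈ s)
    (g : G) (S : Finset ι) : g • dominantSet f s c S = dominantSet f s c (g • S) := by
  ext x
  have hf' : ∀ i, f i (g⁻¹ • x) = f (g • i) x := fun i => by rw [← hf g i, smul_inv_smul]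
  rw [Set.mem_smul_set_iff_inv_smul_mem]
  simp only [dominantSet, Set.mem_ofPred_eq, Finset.smul_finset_def, Finset.forall_mem_image, hf']
  refine forall₂_congr fun i _ => and_congr_right' ⟨fun h j hj hjS => ?_, fun h j hj hjS => ?_⟩
  · simpa [hf'] using h (g⁻¹ • j) (hs _ _ hj)
      (by simpa [← Finset.smul_finset_def, Finset.inv_smul_mem_iff] using hjS)
  · simpa using h (g • j) (hs _ _ hj) (by simpa [← Finset.smul_finset_def] using hjS)

variable [TopologicalSpace X]

theorem isOpen_dominantSet (hf : ∀ i, Continuous (f i)) (S : Finset ι) :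
    IsOpen (dominantSet f s c S) := by
  simp only [dominantSet, Set.ofPred_forall, Set.ofPred_and]
  exact isOpen_biInter_finset fun i _ => (isOpen_lt continuous_const (hf i)).inter <|
    isOpen_biInter_finset fun j _ => isOpen_iInter_of_finite fun _ =>
      isOpen_lt (continuous_const.mul (hf j)) (hf i)

theorem le_of_mem_closure_dominantSet (hf : ∀ i, Continuous (f i)) {S : Finset ι} {x : X}
    (hx : x ∈ closure (dominantSet f s c S)) {i : ι} (hi : i ∈ S) : c ≤ f i x :=
  closure_lt_subset_le continuous_const (hf i) (closure_mono (fun _ hy => (hy i hi).1) hx)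

theorem two_mul_le_of_mem_closure_dominantSet (hf : ∀ i, Continuous (f i)) {S : Finset ι}
    {x : X} (hx : x ∈ closure (dominantSet f s c S)) {i j : ι} (hi : i ∈ S) (hj : j ∈ s)
    (hjS : j ∉ S) : 2 * f j x ≤ f i x :=
  closure_lt_subset_le (continuous_const.mul (hf j)) (hf i)
    (closure_mono (fun _ hy => (hy i hi).2 j hj hjS) hx)

theorem subset_of_mem_closure_dominantSet (hf : ∀ i, Continuous (f i)) (hc : 0 < c)
    {S S' : Finset ι} (hS : S ⊆ s) (hS' : S' ⊆ s) (hcard : S'.card ≤ S.card) {x : X}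
    (hx : x ∈ closure (dominantSet f s c S)) (hx' : x ∈ closure (dominantSet f s c S')) :
    S' ⊆ S := by
  intro j hjS'
  by_contra hjS
  obtain ⟨i, hiS, hiS'⟩ : ∃ i ∈ S, i ∉ S' := by
    refine Finset.not_subset.1 fun hSS' => hjS ?_
    rwa [Finset.eq_of_subset_of_card_le hSS' hcard]
  -- `f i x ≥ 2 f j x ≥ 4 f i x` although `f i x ≥ c > 0`
  have := two_mul_le_of_mem_closure_dominantSet hf hx hiS (hS' hjS') hjS
  have := two_mul_le_of_mem_closure_dominantSet hf hx' hjS' (hS hiS) hiS'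
  have := le_of_mem_closure_dominantSet hf hx hiS
  linarith

theorem dominantLevel_finite (j : ℕ) : (dominantLevel f s c j).Finite :=
  ((s.powerset.finite_toSet).image fun S => interior (closure (dominantSet f s c S))).subset <| by
    rintro _ ⟨S, hS, -, -, rfl⟩
    exact ⟨S, Finset.mem_powerset.2 hS, rfl⟩

variable {j : ℕ} {V : Set X}

theorem isOpen_of_mem_dominantLevel (hV : V ∈ dominantLevel f s c j) : IsOpen V := by
  obtain ⟨S, -, -, -, rfl⟩ := hV
  exact isOpen_interior

theorem interior_closure_eq_of_mem_dominantLevel (hV : V ∈ dominantLevel f s c j) :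
    interior (closure V) = V := by
  obtain ⟨S, -, -, -, rfl⟩ := hV
  exact interior_closure_idem

theorem exists_subset_closure_of_mem_dominantLevel (hV : V ∈ dominantLevel f s c j) :
    ∃ i ∈ s, V ⊆ closure {x | c < f i x} := by
  obtain ⟨S, hS, ⟨i, hi⟩, -, rfl⟩ := hV
  exact ⟨i, hS hi, interior_subset.trans (closure_mono fun x hx => (hx i hi).1)⟩

theorem eq_or_closure_inter_eq_empty_of_mem_dominantLevel (hf : ∀ i, Continuous (f i))
    (hc : 0 < c) {V₀ V₁ : Set X} (hV₀ : V₀ ∈ dominantLevel f s c j)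
    (hV₁ : V₁ ∈ dominantLevel f s c j) : V₀ = V₁ ∨ closure V₀ ∩ closure V₁ = ∅ := by
  obtain ⟨S₀, hS₀, -, rfl, rfl⟩ := hV₀
  obtain ⟨S₁, hS₁, -, hcard, rfl⟩ := hV₁
  refine or_iff_not_imp_right.2 fun hne => ?_
  obtain ⟨x, hx₀, hx₁⟩ := Set.nonempty_iff_ne_empty.2 hne
  have hsub := subset_of_mem_closure_dominantSet hf hc hS₀ hS₁ hcard.le
    (isClosed_closure.closure_interior_subset hx₀) (isClosed_closure.closure_interior_subset hx₁)
  rw [Finset.eq_of_subset_of_card_le hsub hcard.ge]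

theorem ncard_le_of_mem_dominantLevel (hf : ∀ i, Continuous (f i)) (hc : 0 < c) {V₀ : Set X}
    (hV₀ : V₀ ∈ dominantLevel f s c j) {𝒜 : Set (Set X)}
    (h𝒜 : ∀ V ∈ 𝒜, (∃ i ≤ j, V ∈ dominantLevel f s c i) ∧ (V₀ ∩ V).Nonempty) :
    𝒜.ncard ≤ 2 ^ j - 1 := by
  classical
  obtain ⟨S, hS, -, rfl, rfl⟩ := hV₀
  set 𝒮 : Finset (Set X) :=
    (S.powerset.erase ∅).image fun S' => interior (closure (dominantSet f s c S'))
  have h𝒜𝒮 : 𝒜 ⊆ 𝒮 := by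
    intro V hV
    obtain ⟨⟨i, hi, S', hS', hne', rfl, rfl⟩, x, hx, hx'⟩ := h𝒜 V hV
    refine Finset.mem_image_of_mem _ (Finset.mem_erase.2 ⟨hne'.ne_empty, Finset.mem_powerset.2 ?_⟩)
    exact subset_of_mem_closure_dominantSet hf hc hS hS' hi (interior_subset hx)
      (interior_subset hx')
  calc 𝒜.ncard ≤ 𝒮.card := (Set.ncard_le_ncard h𝒜𝒮 𝒮.finite_toSet).trans_eq (Set.ncard_coe_finset _)
    _ ≤ (S.powerset.erase ∅).card := Finset.card_image_le
    _ = 2 ^ S.card - 1 := by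
      rw [Finset.card_erase_of_mem (Finset.empty_mem_powerset S), Finset.card_powerset]

theorem exists_mem_dominantLevel (hf : ∀ i, Continuous (f i)) {m : ℕ} {c₀ : ℝ} (hc₀ : 0 < c₀)
    {x : X} (hcard : {i | i ∈ s ∧ 0 < f i x}.ncard ≤ m) (hlow : ∃ i ∈ s, c₀ ≤ f i x) :
    ∃ j ≤ m, ∃ V ∈ dominantLevel f s (c₀ / 2 ^ (m + 1)) j, x ∈ V := by
  obtain ⟨S, hS, hne, hm, hx⟩ := exists_mem_dominantSet hc₀ hcard hlow
  exact ⟨S.card, hm, _, ⟨S, hS, hne, rfl, rfl⟩,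
    (isOpen_dominantSet hf S).subset_interior_closure hx⟩

theorem smul_mem_dominantLevel {G : Type*} [Group G] [MulAction G ι] [MulAction G X]
    [ContinuousConstSMul G X] (hf : ∀ (g : G) i x, f (g • i) (g • x) = f i x)
    (hs : ∀ g : G, ∀ i ∈ s, g • i ∈ s) (g : G) (hV : V ∈ dominantLevel f s c j) :
    g • V ∈ dominantLevel f s c j := by
  classical
  obtain ⟨S, hS, hne, rfl, rfl⟩ := hV
  refine ⟨g • S, fun i hi => ?_, hne.smul_finset, Finset.card_smul_finset g S, ?_⟩
  · obtain ⟨i', hi', rfl⟩ := Finset.mem_smul_finset.1 hi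
    exact hs g i' (hS hi')
  · rw [← interior_smul, ← closure_smul, smul_dominantSet hf hs]

end Dominance

theorem ncard_setOf_mem_smul_finset_le {X G : Type*} [Group G] [MulAction G X]
    [DecidableEq (Set X)] (T : Finset G) (𝒲 : Finset (Set X)) {N : ℕ}
    (h : ∀ x, {W | W ∈ 𝒲 ∧ x ∈ W}.ncard ≤ N) (x : X) :
    {W | W ∈ T • 𝒲 ∧ x ∈ W}.ncard ≤ T.card * N := by
  classical
  set 𝒮 : Finset (Set X) := T.biUnion fun g => (𝒲.filter (g⁻¹ • x ∈ ·)).image (g • ·)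
  have h𝒮 : {W | W ∈ T • 𝒲 ∧ x ∈ W} ⊆ 𝒮 := by
    rintro _ ⟨hgW, hxW⟩
    obtain ⟨g, hg, W, hW, rfl⟩ := Finset.mem_smul.1 hgW
    exact Finset.mem_biUnion.2 ⟨g, hg, Finset.mem_image_of_mem _
      (Finset.mem_filter.2 ⟨hW, mem_smul_set_iff_inv_smul_mem.1 hxW⟩)⟩
  refine (Set.ncard_le_ncard h𝒮 𝒮.finite_toSet).trans <| (Set.ncard_coe_finset _).trans_le <|
    Finset.card_biUnion_le_card_mul _ _ _ fun g _ => Finset.card_image_le.trans ?_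
  simpa [← Set.ncard_coe_finset] using h (g⁻¹ • x)

section Frontier

variable {X : Type*} [TopologicalSpace X]

theorem ncard_setOf_mem_frontier_le {𝒰 : Set (Set X)} {k : ℕ}
    (hk : ∀ 𝒰₀ ⊆ 𝒰, k < 𝒰₀.ncard → (⋂ U ∈ 𝒰₀, frontier U) = ∅) (x : X) :
    {U | U ∈ 𝒰 ∧ x ∈ frontier U}.ncard ≤ k := by
  by_contra! h
  exact (Set.eq_empty_iff_forall_notMem.1 (hk _ (fun U hU => hU.1) h)) x
    (Set.mem_iInter₂.2 fun U hU => hU.2)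

theorem eventually_mem_iff_of_notMem_frontier {𝒰 : Set (Set X)}
    (h𝒰 : 𝒰.Finite) (x : X) : ∀ᶠ y in 𝓝 x, ∀ U ∈ 𝒰, x ∉ frontier U → (y ∈ U ↔ x ∈ U) := by
  refine (Filter.eventually_all_finite h𝒰).2 fun U _ => ?_
  by_cases hx : x ∈ frontier U
  · exact Filter.Eventually.of_forall fun _ h => absurd hx h
  rw [frontier, Set.mem_sdiff, not_and_not_right] at hx
  by_cases hxU : x ∈ closure U
  · exact Filter.eventually_of_mem (mem_interior_iff_mem_nhds.1 (hx hxU)) fun y hy _ =>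
      iff_of_true hy (interior_subset (hx hxU))
  · exact (Filter.not_frequently.1 (mem_closure_iff_frequently.not.1 hxU)).mono fun y hy _ =>
      iff_of_false hy fun h => hxU (subset_closure h)

end Frontier

section Metric

variable {X : Type*} [PseudoMetricSpace X]

theorem exists_pos_forall_diam_lt_ncard_le [CompactSpace X] {𝒰 : Set (Set X)}
    (h𝒰 : 𝒰.Finite) {k : ℕ} (hk : ∀ 𝒰₀ ⊆ 𝒰, k < 𝒰₀.ncard → (⋂ U ∈ 𝒰₀, frontier U) = ∅) :
    ∃ r > 0, ∀ A : Set X, diam A < r → {U | U ∈ 𝒰 ∧ (U ∩ A).Nonempty ∧ ¬ A ⊆ U}.ncard ≤ k := by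
  set N : X → Set X := fun x => {y | ∀ U ∈ 𝒰, x ∉ frontier U → (y ∈ U ↔ x ∈ U)}
  obtain ⟨r, hr, hN⟩ := lebesgue_number_lemma_of_metric (c := fun x => interior (N x))
    isCompact_univ (fun _ => isOpen_interior) fun x _ => Set.mem_iUnion.2
      ⟨x, mem_interior_iff_mem_nhds.2 (eventually_mem_iff_of_notMem_frontier h𝒰 x)⟩
  refine ⟨r, hr, fun A hA => ?_⟩
  rcases A.eq_empty_or_nonempty with rfl | ⟨a, ha⟩
  · simp
  obtain ⟨x, hx⟩ := hN a trivial
  have hAN : A ⊆ N x := fun y hy => interior_subset <| hx <|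
    mem_ball.2 ((dist_le_diam_of_mem isBounded_of_compactSpace hy ha).trans_lt hA)
  refine (Set.ncard_le_ncard ?_ (h𝒰.subset fun U hU => hU.1)).trans
    (ncard_setOf_mem_frontier_le hk x)
  rintro U ⟨hU, ⟨y, hyU, hyA⟩, hAU⟩
  refine ⟨hU, by_contra fun hxU => hAU fun z hz => ?_⟩
  exact (hAN hz U hU hxU).2 ((hAN hyA U hU hxU).1 hyU)

/-- `infDist x Wᶜ`, except that the junk value `infDist x ∅ = 0` at `W = univ` is replaced
by `1`. -/
noncomputable def distCompl (W : Set X) (x : X) : ℝ :=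
  if W = univ then 1 else infDist x Wᶜ

theorem continuous_distCompl (W : Set X) : Continuous (distCompl W) := by
  unfold distCompl
  split_ifs
  exacts [continuous_const, continuous_infDist_pt _]

theorem mem_of_distCompl_pos {W : Set X} {x : X} (hx : 0 < distCompl W x) : x ∈ W := by
  unfold distCompl at hx
  split_ifs at hx with hW
  · exact hW ▸ mem_univ x
  · by_contra hxW
    exact hx.ne' (infDist_zero_of_mem hxW)

theorem distCompl_smul {G : Type*} [Group G] [MulAction G X] [IsIsometricSMul G X] (g : G)
    (W : Set X) (x : X) : distCompl (g • W) (g • x) = distCompl W x := by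
  simp only [distCompl, smul_set_eq_univ]
  split_ifs
  · rfl
  · rw [← smul_set_compl, ← image_smul, infDist_image (isometry_smul X g)]

theorem ncard_setOf_distCompl_pos_le (𝒲 : Finset (Set X)) (x : X) :
    {W | W ∈ 𝒲 ∧ 0 < distCompl W x}.ncard ≤ {W | W ∈ 𝒲 ∧ x ∈ W}.ncard :=
  Set.ncard_le_ncard (fun _ hW => ⟨hW.1, mem_of_distCompl_pos hW.2⟩)
    (𝒲.finite_toSet.subset fun _ hW => hW.1)

theorem diam_lt_of_mem_dominantLevel_distCompl [CompactSpace X] {𝒲 : Finset (Set X)} {c r : ℝ}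
    (hc : 0 ≤ c) (h𝒲 : ∀ W ∈ 𝒲, diam W < r) {j : ℕ} {V : Set X}
    (hV : V ∈ dominantLevel distCompl 𝒲 c j) : diam V < r := by
  obtain ⟨W, hW, hVW⟩ := exists_subset_closure_of_mem_dominantLevel hV
  have hVW' : V ⊆ closure W :=
    hVW.trans (closure_mono fun x hx => mem_of_distCompl_pos (hc.trans_lt hx))
  calc diam V ≤ diam W := (diam_mono hVW' isBounded_of_compactSpace).trans_eq (diam_closure W)
    _ < r := h𝒲 W hW

theorem exists_pos_forall_exists_le_distCompl [CompactSpace X] {𝒲 : Set (Set X)}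
    (h𝒲 : ∀ W ∈ 𝒲, IsOpen W) (hcover : ∀ x, ∃ W ∈ 𝒲, x ∈ W) :
    ∃ c₀ > 0, ∀ x, ∃ W ∈ 𝒲, c₀ ≤ distCompl W x := by
  obtain ⟨r, hr, hball⟩ := lebesgue_number_lemma_of_metric_sUnion isCompact_univ h𝒲
    fun x _ => mem_sUnion.2 (hcover x)
  refine ⟨min r 1, lt_min hr one_pos, fun x => ?_⟩
  obtain ⟨W, hW, hxW⟩ := hball x trivial
  refine ⟨W, hW, ?_⟩
  unfold distCompl
  split_ifs with hWu
  · exact min_le_right _ _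
  · refine (min_le_left _ _).trans ((le_infDist (nonempty_compl.2 hWu)).2 fun y hy => ?_)
    exact not_lt.1 fun h => hy (hxW (mem_ball'.2 h))

theorem exists_finset_isOpen_cover_diam_lt [CompactSpace X] {n : ℕ}
    (hdim : coveringDimLE X n) {r : ℝ} (hr : 0 < r) :
    ∃ 𝒲 : Finset (Set X), (∀ W ∈ 𝒲, IsOpen W ∧ diam W < r) ∧ (∀ x, ∃ W ∈ 𝒲, x ∈ W) ∧
      ∀ x, {W | W ∈ 𝒲 ∧ x ∈ W}.ncard ≤ n + 1 := by
  obtain ⟨𝒲, h𝒲open, h𝒲cover, h𝒲ref, h𝒲dim⟩ := hdim (range fun y => ball y (r / 4))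
    (forall_mem_range.2 fun _ => isOpen_ball)
    (sUnion_eq_univ_iff.2 fun x => ⟨_, mem_range_self x, mem_ball_self (by positivity)⟩)
  obtain ⟨𝒲', h𝒲'sub, h𝒲'fin, h𝒲'cover⟩ := isCompact_univ.elim_finite_subcover_image
    (c := id) h𝒲open (by simpa [← sUnion_eq_biUnion] using h𝒲cover.ge)
  refine ⟨h𝒲'fin.toFinset, fun W hW => ?_, fun x => ?_, fun x => ?_⟩
  · rw [Set.Finite.mem_toFinset] at hW
    obtain ⟨_, ⟨y, rfl⟩, hWy⟩ := h𝒲ref W (h𝒲'sub hW)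
    refine ⟨h𝒲open W (h𝒲'sub hW), (diam_mono hWy isBounded_ball).trans_lt ?_⟩
    linarith [diam_ball (x := y) (by positivity : 0 ≤ r / 4)]
  · simpa using h𝒲'cover (mem_univ x)
  · refine (Set.ncard_le_ncard (t := {V | V ∈ 𝒲 ∧ x ∈ V}) ?_ (h𝒲dim x).1).trans (h𝒲dim x).2
    rintro W ⟨hW, hxW⟩
    exact ⟨h𝒲'sub (by simpa using hW), hxW⟩

theorem exists_invariant_finset_isOpen_cover_diam_lt [CompactSpace X] {n : ℕ}
    (hdim : coveringDimLE X n) (G : Type*) [Group G] [Finite G] [MulAction G X]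
    [IsIsometricSMul G X] {r : ℝ} (hr : 0 < r) :
    ∃ 𝒲 : Finset (Set X), (∀ W ∈ 𝒲, IsOpen W ∧ diam W < r) ∧ (∀ x, ∃ W ∈ 𝒲, x ∈ W) ∧
      (∀ x, {W | W ∈ 𝒲 ∧ x ∈ W}.ncard ≤ (n + 1) * Nat.card G) ∧
      ∀ g : G, ∀ W ∈ 𝒲, g • W ∈ 𝒲 := by
  classical
  have := Fintype.ofFinite G
  obtain ⟨𝒲, h𝒲, hcover, hord⟩ := exists_finset_isOpen_cover_diam_lt hdim hr
  refine ⟨(Finset.univ : Finset G) • 𝒲, fun W hW => ?_, fun x => ?_, fun x => ?_, fun g W hW => ?_⟩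
  · obtain ⟨g, -, W, hW𝒲, rfl⟩ := Finset.mem_smul.1 hW
    exact ⟨(h𝒲 W hW𝒲).1.smul g, (diam_smul g W).trans_lt (h𝒲 W hW𝒲).2⟩
  · obtain ⟨W, hW, hxW⟩ := hcover x
    exact ⟨(1 : G) • W, Finset.smul_mem_smul (Finset.mem_univ 1) hW, by rwa [one_smul]⟩
  · rw [mul_comm, Nat.card_eq_fintype_card]
    exact ncard_setOf_mem_smul_finset_le _ _ hord x
  · obtain ⟨g', -, W, hW𝒲, rfl⟩ := Finset.mem_smul.1 hW
    rw [smul_smul]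
    exact Finset.smul_mem_smul (Finset.mem_univ _) hW𝒲

end Metric

theorem cover_compatible_with_collection_general
    (Z : Type*) [MetricSpace Z] [CompactSpace Z]
    (n : ℕ) (hdim : coveringDimLE Z n)
    (F : Type*) [Group F] [Finite F] [MulAction F Z]
    (hiso : ∀ g : F, Isometry (fun z : Z => g • z))
    (𝒰 : Set (Set Z)) (hUfin : 𝒰.Finite)
    (k : ℕ) (hk : ∀ 𝒰₀ ⊆ 𝒰, k < 𝒰₀.ncard → (⋂ U ∈ 𝒰₀, frontier U) = ∅)
    (δ : ℝ) (hδ : 0 < δ) :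
    ∃ 𝒱 : Fin ((n + 1) * Nat.card F + 1) → Set (Set Z),
      (∀ j, (𝒱 j).Finite) ∧
      -- (1) 𝒱 = 𝒱⁰ ∪ … ∪ 𝒱^m is an open cover of Z
      (∀ j, ∀ V ∈ 𝒱 j, IsOpen V) ∧ (⋃ j, ⋃₀ 𝒱 j) = Set.univ ∧
      -- (2) diameters < δ
      (∀ j, ∀ V ∈ 𝒱 j, Metric.diam V < δ) ∧
      -- (3) each V meets-without-being-contained-in at most k·|F| members of 𝒰
      (∀ j, ∀ V ∈ 𝒱 j,
        {U | U ∈ 𝒰 ∧ (U ∩ V).Nonempty ∧ ¬ V ⊆ U}.ncard ≤ k * Nat.card F) ∧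
      -- (4) intersection bound within 𝒱⁰ ∪ … ∪ 𝒱^j
      (∀ j, ∀ V₀ ∈ 𝒱 j,
        {V | (∃ i, i ≤ j ∧ V ∈ 𝒱 i) ∧ (V₀ ∩ V).Nonempty}.ncard ≤ 2 ^ ((j : ℕ) + 1) - 2) ∧
      -- (5) members of a fixed 𝒱^j have disjoint closures or are equal
      (∀ j, ∀ V₀ ∈ 𝒱 j, ∀ V₁ ∈ 𝒱 j, V₀ = V₁ ∨ closure V₀ ∩ closure V₁ = ∅) ∧
      -- (6) F-invariance of each 𝒱^j
      (∀ j, ∀ (g : F), ∀ V ∈ 𝒱 j, g • V ∈ 𝒱 j) ∧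
      -- (7) regular open
      (∀ j, ∀ V ∈ 𝒱 j, V = interior (closure V)) := by
  have : IsIsometricSMul F Z := ⟨hiso⟩
  obtain ⟨r, hr, hstraddle⟩ := exists_pos_forall_diam_lt_ncard_le hUfin hk
  obtain ⟨𝒲, h𝒲, hcover, hord, hinv⟩ :=
    exists_invariant_finset_isOpen_cover_diam_lt hdim F (lt_min hr hδ)
  obtain ⟨c₀, hc₀, hlow⟩ :=
    exists_pos_forall_exists_le_distCompl (fun W hW => (h𝒲 W hW).1) hcover
  set c := c₀ / 2 ^ ((n + 1) * Nat.card F + 1)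
  have hc : 0 < c := by positivity
  have hdiam : ∀ j, ∀ V ∈ dominantLevel distCompl 𝒲 c j, diam V < min r δ := fun j V hV =>
    diam_lt_of_mem_dominantLevel_distCompl hc.le (fun W hW => (h𝒲 W hW).2) hV
  refine ⟨fun j => dominantLevel distCompl 𝒲 c j, fun j => dominantLevel_finite j,
    fun j V => isOpen_of_mem_dominantLevel, ?_,
    fun j V hV => (hdiam j V hV).trans_le (min_le_right _ _),
    fun j V hV => (hstraddle V ((hdiam j V hV).trans_le (min_le_left _ _))).trans
      (Nat.le_mul_of_pos_right k Nat.card_pos),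
    fun j V₀ hV₀ => (ncard_le_of_mem_dominantLevel continuous_distCompl hc hV₀ fun V hV =>
      ⟨let ⟨i, hij, hVi⟩ := hV.1; ⟨i, hij, hVi⟩, hV.2⟩).trans
        (by have := Nat.one_le_two_pow (n := j); rw [pow_succ]; omega),
    fun j V₀ hV₀ V₁ hV₁ =>
      eq_or_closure_inter_eq_empty_of_mem_dominantLevel continuous_distCompl hc hV₀ hV₁,
    fun j g V hV => smul_mem_dominantLevel distCompl_smul hinv g hV,
    fun j V hV => (interior_closure_eq_of_mem_dominantLevel hV).symm⟩
  refine Set.eq_univ_of_forall fun x => ?_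
  obtain ⟨j, hj, V, hV, hxV⟩ := exists_mem_dominantLevel continuous_distCompl hc₀
    ((ncard_setOf_distCompl_pos_le 𝒲 x).trans (hord x)) (hlow x)
  exact Set.mem_iUnion.2 ⟨⟨j, Nat.lt_succ_of_le hj⟩, V, hV, hxV⟩

/-- Proposition 3.3: existence of a fine open cover `𝒱 = 𝒱⁰ ∪ … ∪ 𝒱^m` of `Z`
compatible with a given collection `𝒰`. -/
theorem cover_compatible_with_collection
    (Z : Type*) [MetricSpace Z] [CompactSpace Z]
    (n : ℕ) (hdim : coveringDimLE Z n)
    (F : Type*) [Group F] [Finite F] [MulAction F Z]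
    (hiso : ∀ g : F, Isometry (fun z : Z => g • z))
    (Y : Set Z) (hYopen : IsOpen Y) (hYlc : LocallyConnectedSpace ↥Y)
    (hYinv : ∀ g : F, g • Y = Y)
    (𝒰 : Set (Set Z)) (hUfin : 𝒰.Finite) (hUopen : ∀ U ∈ 𝒰, IsOpen U)
    (hUinv : ∀ (g : F), ∀ U ∈ 𝒰, g • U ∈ 𝒰)
    (hUY : ∀ U ∈ 𝒰, closure U ⊆ Y)
    (k : ℕ) (hk : ∀ 𝒰₀ ⊆ 𝒰, k < 𝒰₀.ncard → (⋂ U ∈ 𝒰₀, frontier U) = ∅)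
    (δ : ℝ) (hδ : 0 < δ) :
    ∃ 𝒱 : Fin ((n + 1) * Nat.card F + 1) → Set (Set Z),
      (∀ j, (𝒱 j).Finite) ∧
      -- (1) 𝒱 = 𝒱⁰ ∪ … ∪ 𝒱^m is an open cover of Z
      (∀ j, ∀ V ∈ 𝒱 j, IsOpen V) ∧ (⋃ j, ⋃₀ 𝒱 j) = Set.univ ∧
      -- (2) diameters < δ
      (∀ j, ∀ V ∈ 𝒱 j, Metric.diam V < δ) ∧
      -- (3) each V meets-without-being-contained-in at most k·|F| members of 𝒰
      (∀ j, ∀ V ∈ 𝒱 j,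
        {U | U ∈ 𝒰 ∧ (U ∩ V).Nonempty ∧ ¬ V ⊆ U}.ncard ≤ k * Nat.card F) ∧
      -- (4) intersection bound within 𝒱⁰ ∪ … ∪ 𝒱^j
      (∀ j, ∀ V₀ ∈ 𝒱 j,
        {V | (∃ i, i ≤ j ∧ V ∈ 𝒱 i) ∧ (V₀ ∩ V).Nonempty}.ncard ≤ 2 ^ ((j : ℕ) + 1) - 2) ∧
      -- (5) members of a fixed 𝒱^j have disjoint closures or are equal
      (∀ j, ∀ V₀ ∈ 𝒱 j, ∀ V₁ ∈ 𝒱 j, V₀ = V₁ ∨ closure V₀ ∩ closure V₁ = ∅) ∧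
      -- (6) F-invariance of each 𝒱^j
      (∀ j, ∀ (g : F), ∀ V ∈ 𝒱 j, g • V ∈ 𝒱 j) ∧
      -- (7) regular open
      (∀ j, ∀ V ∈ 𝒱 j, V = interior (closure V)) :=
  cover_compatible_with_collection_general Z n hdim F hiso 𝒰 hUfin k hk δ hδ
end

section
/- Let G be a discrete group, X a metrizable topological space with a proper cocompact G-action, and Φ a G-equivariant flow on X. Then there exists a collection U of open Fin-subsets of X such that G\U is finite, X^ℝ ⊆ ∪_{U∈U} U, and dim(U) < ∞, i.e. there is N such that every point of X lies in at most N+1 members of U. -/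
open Pointwise

lemma IsFinSubset.smul {G X : Type*} [Group G] [MulAction G X] {B : Set X}
    (hB : IsFinSubset G B) (g : G) : IsFinSubset G (g • B) := by
  have hiff : ∀ k : G, k • g • B = g • B ↔ (g⁻¹ * k * g) • B = B := by
    intro k
    rw [smul_smul]
    constructor
    · intro h
      rw [mul_assoc, ← smul_smul, h, smul_smul, inv_mul_cancel, one_smul]
    · intro h
      have hkg : k * g = g * (g⁻¹ * k * g) := by group
      rw [hkg, ← smul_smul, h]
  constructor
  · have : {k : G | k • (g • B) = g • B} = (fun h => g * h * g⁻¹) '' {h : G | h • B = B} := by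
      ext k
      simp only [Set.mem_setOf_eq, Set.mem_image]
      rw [hiff]
      constructor
      · intro h
        exact ⟨g⁻¹ * k * g, h, by group⟩
      · rintro ⟨h, hh, rfl⟩
        have : g⁻¹ * (g * h * g⁻¹) * g = h := by group
        rwa [this]
    rw [this]
    exact hB.1.image _
  · intro k hk
    have h2 : (((g⁻¹ * k * g) • B) ∩ B).Nonempty := by
      obtain ⟨y, hy1, hy2⟩ := hk
      refine ⟨g⁻¹ • y, ?_, ?_⟩
      · rw [Set.mem_smul_set_iff_inv_smul_mem, Set.mem_smul_set_iff_inv_smul_mem] at hy1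
        rw [Set.mem_smul_set_iff_inv_smul_mem, smul_smul,
          show (g⁻¹ * k * g)⁻¹ * g⁻¹ = g⁻¹ * k⁻¹ by group, ← smul_smul]
        exact hy1
      · rw [Set.mem_smul_set_iff_inv_smul_mem] at hy2
        exact hy2
    exact (hiff k).2 (hB.2 _ h2)

lemma exists_fin_nbhd {G X : Type*} [Group G] [TopologicalSpace X] [T2Space X]
    [MulAction G X] [ContinuousConstSMul G X]
    (hproper : IsProperAction G X) (x : X) :
    ∃ V : Set X, IsOpen V ∧ x ∈ V ∧ IsFinSubset G V := by
  classical
  obtain ⟨U, hUopen, hxU, hSfin⟩ := hproper x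
  set S := {g : G | ((g • U) ∩ U).Nonempty} with hS
  set H : Set G := {g : G | g • x = x} with hHdef
  have hHS : H ⊆ S := by
    intro h hh
    exact ⟨x, ⟨x, hxU, hh⟩, hxU⟩
  -- separation sets for g ∈ S \ H
  have key : ∀ g ∈ S \ H, ∃ Wg : Set X, IsOpen Wg ∧ x ∈ Wg ∧ (g • Wg) ∩ Wg = ∅ := by
    intro g hg
    have hne : g • x ≠ x := hg.2
    obtain ⟨A, B, hA, hB, hgxA, hxB, hAB⟩ := t2_separation hne
    refine ⟨g⁻¹ • A ∩ B, (hA.smul g⁻¹).inter hB, ⟨?_, hxB⟩, ?_⟩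
    · rw [Set.mem_smul_set_iff_inv_smul_mem, inv_inv]; exact hgxA
    · apply Set.eq_empty_of_forall_notMem
      rintro y ⟨hy1, hy2⟩
      rw [Set.mem_smul_set_iff_inv_smul_mem] at hy1
      have hyA : y ∈ A := by
        have := hy1.1
        rwa [Set.mem_smul_set_iff_inv_smul_mem, inv_inv, smul_smul, mul_inv_cancel, one_smul] at this
      exact hAB.ne_of_mem hyA hy2.2 rfl
  choose! Wg hWgopen hxWg hWgdisj using key
  set W' : Set X := U ∩ ⋂ g ∈ S \ H, Wg g with hW'def
  have hSHfin : (S \ H).Finite := hSfin.subset Set.diff_subset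
  have hW'open : IsOpen W' := hUopen.inter (hSHfin.isOpen_biInter fun g hg => hWgopen g hg)
  have hxW' : x ∈ W' := ⟨hxU, Set.mem_biInter fun g hg => hxWg g hg⟩
  have hHfin : H.Finite := hSfin.subset hHS
  set V : Set X := ⋂ h ∈ H, h • W' with hVdef
  have hVmem : ∀ y : X, y ∈ V ↔ ∀ h ∈ H, h⁻¹ • y ∈ W' := by
    intro y
    simp only [hVdef, Set.mem_iInter, Set.mem_smul_set_iff_inv_smul_mem]
  have hxV : x ∈ V := by
    rw [hVmem]
    intro h hh
    have : h⁻¹ • x = x := by rw [inv_smul_eq_iff]; exact hh.symm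
    rw [this]; exact hxW'
  have hVopen : IsOpen V := hHfin.isOpen_biInter fun h hh => hW'open.smul h
  have hVW' : V ⊆ W' := by
    intro y hy
    have := (hVmem y).1 hy 1 (by simp [hHdef])
    simpa using this
  have hVU : V ⊆ U := fun y hy => (hVW' hy).1
  -- H is a submonoid-like set: closed under mul and inv
  have hHmul : ∀ a b, a ∈ H → b ∈ H → a * b ∈ H := by
    intro a b ha hb; simp only [hHdef, Set.mem_setOf_eq] at *
    rw [mul_smul, hb, ha]
  have hHinv : ∀ a, a ∈ H → a⁻¹ ∈ H := by
    intro a ha; simp only [hHdef, Set.mem_setOf_eq] at *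
    rw [← ha, smul_smul, inv_mul_cancel, one_smul, ha]
  have hHV : ∀ h ∈ H, h • V = V := by
    intro h hh
    ext y
    rw [Set.mem_smul_set_iff_inv_smul_mem, hVmem, hVmem]
    constructor
    · intro hy m hm
      have := hy (h⁻¹ * m) (hHmul _ _ (hHinv _ hh) hm)
      rwa [mul_inv_rev, inv_inv, smul_smul, mul_inv_cancel_right] at this
    · intro hy k hk
      have := hy (h * k) (hHmul _ _ hh hk)
      rw [smul_smul, ← mul_inv_rev]; exact this
  refine ⟨V, hVopen, hxV, ?_, ?_⟩
  · -- stabilizer set finite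
    apply hSfin.subset
    intro g hg
    simp only [Set.mem_setOf_eq] at hg
    have : x ∈ (g • V) ∩ V := ⟨by rw [hg]; exact hxV, hxV⟩
    exact ⟨x, Set.smul_set_mono hVU this.1, hVU this.2⟩
  · intro g hgne
    have hgS : g ∈ S := by
      obtain ⟨y, hy1, hy2⟩ := hgne
      exact ⟨y, Set.smul_set_mono hVU hy1, hVU hy2⟩
    by_cases hgH : g ∈ H
    · exact hHV g hgH
    · exfalso
      obtain ⟨y, hy1, hy2⟩ := hgne
      have hgSH : g ∈ S \ H := ⟨hgS, hgH⟩
      have hyWg : y ∈ Wg g := by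
        have := (hVW' hy2).2
        exact Set.mem_iInter₂.mp this g hgSH
      have hygWg : y ∈ g • Wg g := by
        rw [Set.mem_smul_set_iff_inv_smul_mem] at hy1 ⊢
        have := (hVW' hy1).2
        exact Set.mem_iInter₂.mp this g hgSH
      have := hWgdisj g hgSH
      exact absurd (Set.mem_inter hygWg hyWg) (by rw [this]; exact Set.notMem_empty y)

/-- Lemma 5.1: there is a `G`-invariant collection `𝒰` of open `Fin`-subsets of `X`
covering `X^ℝ`, with `G\𝒰` finite and `dim 𝒰 < ∞`. -/
theorem cover_of_flow_fixed_points
    (G X : Type*) [Group G] [TopologicalSpace X] [TopologicalSpace.MetrizableSpace X]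
    [MulAction G X] [ContinuousConstSMul G X]
    (hproper : IsProperAction G X) (hcocompact : IsCocompactAction G X)
    (Φ : ℝ → X → X) (hflow : IsEquivariantFlow G Φ) :
    ∃ 𝒰 : Set (Set X),
      (∀ U ∈ 𝒰, IsOpen U ∧ IsFinSubset G U) ∧
      (∀ (g : G), ∀ U ∈ 𝒰, g • U ∈ 𝒰) ∧
      (∃ 𝒰₀ : Set (Set X), 𝒰₀.Finite ∧ 𝒰₀ ⊆ 𝒰 ∧ ∀ U ∈ 𝒰, ∃ g : G, g • U ∈ 𝒰₀) ∧
      flowFixed Φ ⊆ ⋃₀ 𝒰 ∧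
      (∃ N : ℕ, dimLE 𝒰 N) := by
  classical
  letI := TopologicalSpace.metrizableSpaceMetric X
  choose V hVopen hxV hVfin using exists_fin_nbhd (G := G) hproper
  -- finite subcover from cocompactness
  obtain ⟨t, ht⟩ : ∃ t : Finset X, ∀ y : X, ∃ x ∈ t, ∃ g : G, y ∈ g • V x := by
    haveI : CompactSpace (Quotient (MulAction.orbitRel G X)) := hcocompact
    set q : X → Quotient (MulAction.orbitRel G X) := Quotient.mk _ with hq
    have hpre : ∀ x : X, q ⁻¹' (q '' V x) = ⋃ g : G, g • V x := by
      intro x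
      ext y
      simp only [Set.mem_preimage, Set.mem_image, Set.mem_iUnion]
      constructor
      · rintro ⟨v, hv, hqv⟩
        have : v ∈ MulAction.orbit G y := Quotient.eq''.mp hqv
        obtain ⟨g, hg⟩ := this
        refine ⟨g⁻¹, ?_⟩
        rw [Set.mem_smul_set_iff_inv_smul_mem, inv_inv, show g • y = v from hg]
        exact hv
      · rintro ⟨g, hg⟩
        rw [Set.mem_smul_set_iff_inv_smul_mem] at hg
        exact ⟨g⁻¹ • y, hg, Quotient.sound ⟨g⁻¹, rfl⟩⟩
    have hopen : ∀ x : X, IsOpen (q '' V x) := by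
      intro x
      rw [isOpen_coinduced (f := q), hpre]
      exact isOpen_iUnion fun g => (hVopen x).smul g
    have hcover : Set.univ ⊆ ⋃ x : X, q '' V x := by
      rintro cl -
      obtain ⟨y, rfl⟩ := Quotient.exists_rep cl
      exact Set.mem_iUnion.mpr ⟨y, y, hxV y, rfl⟩
    obtain ⟨t, ht⟩ := isCompact_univ.elim_finite_subcover (fun x : X => q '' V x) hopen hcover
    refine ⟨t, fun y => ?_⟩
    have := ht (Set.mem_univ (q y))
    simp only [Set.mem_iUnion] at this
    obtain ⟨x, hxt, v, hv, hqv⟩ := this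
    have : v ∈ MulAction.orbit G y := Quotient.eq''.mp hqv
    obtain ⟨g, hg⟩ := this
    refine ⟨x, hxt, g⁻¹, ?_⟩
    rw [Set.mem_smul_set_iff_inv_smul_mem, inv_inv, show g • y = v from hg]
    exact hv
  set 𝒰 : Set (Set X) := {U : Set X | ∃ x ∈ t, ∃ g : G, U = g • V x} with h𝒰
  -- uniqueness: at most one translate of V x contains a given point
  have huniq : ∀ (y : X) (x : X) (g g' : G), y ∈ g • V x → y ∈ g' • V x →
      g • V x = g' • V x := by
    intro y x g g' hy hy'
    have hne : (((g'⁻¹ * g) • V x) ∩ V x).Nonempty := by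
      refine ⟨g'⁻¹ • y, ?_, ?_⟩
      · rw [Set.mem_smul_set_iff_inv_smul_mem] at hy ⊢
        rwa [smul_smul, mul_inv_rev, inv_inv, mul_assoc, mul_inv_cancel, mul_one]
      · rwa [← Set.mem_smul_set_iff_inv_smul_mem]
    have heq := (hVfin x).2 _ hne
    calc g • V x = g' • (g'⁻¹ * g) • V x := by
            rw [smul_smul, mul_inv_cancel_left]
      _ = g' • V x := by rw [heq]
  refine ⟨𝒰, ?_, ?_, ?_, ?_, ?_⟩
  · rintro U ⟨x, hx, g, rfl⟩
    exact ⟨(hVopen x).smul g, (hVfin x).smul g⟩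
  · rintro g' U ⟨x, hx, g, rfl⟩
    exact ⟨x, hx, g' * g, smul_smul g' g (V x)⟩
  · refine ⟨(fun x => V x) '' ↑t, t.finite_toSet.image _, ?_, ?_⟩
    · rintro W ⟨x, hx, rfl⟩
      exact ⟨x, hx, 1, (one_smul G (V x)).symm⟩
    · rintro U ⟨x, hx, g, rfl⟩
      refine ⟨g⁻¹, ⟨x, hx, ?_⟩⟩
      rw [smul_smul, inv_mul_cancel, one_smul]
  · intro y _
    obtain ⟨x, hx, g, hg⟩ := ht y
    exact ⟨g • V x, ⟨x, hx, g, rfl⟩, hg⟩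
  · refine ⟨t.card, fun y => ?_⟩
    set Sy : Set (Set X) := {W | W ∈ 𝒰 ∧ y ∈ W} with hSy
    set f : Set X → X := fun W =>
      if h : ∃ x ∈ t, ∃ g : G, W = g • V x then h.choose else y with hf
    have hspec : ∀ W ∈ Sy, f W ∈ t ∧ ∃ g : G, W = g • V (f W) := by
      rintro W ⟨hW𝒰, _⟩
      have h : ∃ x ∈ t, ∃ g : G, W = g • V x := hW𝒰
      simp only [hf, dif_pos h]
      exact h.choose_spec
    have hinj : Set.InjOn f Sy := by
      intro W hW W' hW' hff
      obtain ⟨hWt, g, hWeq⟩ := hspec W hW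
      obtain ⟨hW't, g', hW'eq⟩ := hspec W' hW'
      have hWeq' : W = g • V (f W') := by rw [← hff]; exact hWeq
      have hyW : y ∈ g • V (f W') := hWeq' ▸ hW.2
      have hyW' : y ∈ g' • V (f W') := hW'eq ▸ hW'.2
      exact hWeq'.trans ((huniq y (f W') g g' hyW hyW').trans hW'eq.symm)
    have himg : f '' Sy ⊆ ↑t := by
      rintro _ ⟨W, hW, rfl⟩
      exact (hspec W hW).1
    have hfin : Sy.Finite :=
      Set.Finite.of_finite_image (t.finite_toSet.subset himg) hinj
    refine ⟨hfin, ?_⟩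
    calc Sy.ncard = (f '' Sy).ncard := (Set.ncard_image_of_injOn hinj).symm
      _ ≤ (↑t : Set X).ncard := Set.ncard_le_ncard himg t.finite_toSet
      _ = t.card := Set.ncard_coe_finset t
      _ ≤ t.card + 1 := Nat.le_succ _
end
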